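/- arXiv:2106.02129 — 6 statements merged into one kernel-verified Lean document; each statement's English description precedes it below -/
import Mathlib

section
/- Let n, m, k, D be positive integers and δ, η, ν ∈ [0,1], γ ≥ 1. If there exists a random degree-D polynomial that (δ, γ, η, ν)-solves Φ_k(n,m), then there exists a deterministic degree-D polynomial that (3δ, 3γ, η, ν)-solves Φ_k(n,m). -/
open MeasureTheory Finset Filter ProbabilityTheory

universe u

/-! ## k-SAT basics -/

/-- A `k`-SAT formula on `n` variables with `m` clauses: each clause is an ordered
`k`-tuple of literals, a literal being a pair (variable index, polarity). -/
abbrev Formula (n m k : ℕ) := Fin m → Fin k → Fin n × Bool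

/-- An assignment satisfies a clause if some literal of the clause is satisfied. -/
def satClause {n k : ℕ} (x : Fin n → Bool) (C : Fin k → Fin n × Bool) : Prop :=
  ∃ j : Fin k, x (C j).1 = (C j).2

/-- Normalized Hamming distance. -/
noncomputable def hamΔ {n : ℕ} {α : Type*} (x y : Fin n → α) : ℝ :=
  (Nat.card {i : Fin n // x i ≠ y i} : ℝ) / n

/-- `x` ν-satisfies `Φ` if it satisfies at least `(1-ν)m` clauses. -/
def nuSat {n m k : ℕ} (x : Fin n → Bool) (Φ : Formula n m k) (ν : ℝ) : Prop :=
  (1 - ν) * m ≤ (Nat.card {i : Fin m // satClause x (Φ i)} : ℝ)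

/-- `x ∈ {T,F,err}^n` (η,ν)-satisfies `Φ` (`none` is the error symbol). -/
def etaNuSat {n m k : ℕ} (x : Fin n → Option Bool) (Φ : Formula n m k) (η ν : ℝ) : Prop :=
  ∃ y : Fin n → Bool, hamΔ x (fun i => some (y i)) ≤ η ∧ nuSat y Φ ν

/-! ## polynomials and solving -/

/-- Index set for the one-hot encoding of a formula, of cardinality `N = 2knm`. -/
abbrev Coords (n m k : ℕ) := Fin m × Fin k × (Fin n × Bool)

/-- One-hot encoding of a formula as a vector in `ℝ^N`. -/
def encode {n m k : ℕ} (Φ : Formula n m k) : Coords n m k → ℝ :=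
  fun p => if Φ p.1 p.2.1 = p.2.2 then 1 else 0

/-- `g` agrees with a real multivariate polynomial of total degree at most `D`. -/
def IsPolyDeg {σ : Type*} (D : ℕ) (g : (σ → ℝ) → ℝ) : Prop :=
  ∃ p : MvPolynomial σ ℝ, p.totalDegree ≤ D ∧ ∀ x, g x = MvPolynomial.eval x p

/-- `f : ℝ^N → ℝ^n` is a (deterministic) degree-`D` polynomial. -/
def IsDegPoly (n m k D : ℕ) (f : (Coords n m k → ℝ) → Fin n → ℝ) : Prop :=
  ∀ i : Fin n, IsPolyDeg D (fun x => f x i)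

open Classical in
/-- The rounding map: `T` if `x ≥ 1`, `F` if `x ≤ -1`, `err` otherwise. -/
noncomputable def roundR (x : ℝ) : Option Bool :=
  if 1 ≤ x then some true else if x ≤ -1 then some false else none

/-- Expectation over a uniformly random formula. -/
noncomputable def Eform (n m k : ℕ) (g : Formula n m k → ℝ) : ℝ :=
  (∑ Φ : Formula n m k, g Φ) / (Fintype.card (Formula n m k) : ℝ)

open Classical in
/-- Probability over a uniformly random formula. -/
noncomputable def Pform (n m k : ℕ) (A : Formula n m k → Prop) : ℝ :=
  Eform n m k (fun Φ => if A Φ then 1 else 0)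

/-- A deterministic degree-`D` polynomial `(δ,γ,η,ν)`-solves random `k`-SAT. -/
def DetSolves (n m k D : ℕ) (f : (Coords n m k → ℝ) → Fin n → ℝ) (δ γ η ν : ℝ) : Prop :=
  IsDegPoly n m k D f ∧
  1 - δ ≤ Pform n m k (fun Φ => etaNuSat (fun i => roundR (f (encode Φ) i)) Φ η ν) ∧
  Eform n m k (fun Φ => ∑ i, (f (encode Φ) i) ^ 2) ≤ γ * n

/-- A random degree-`D` polynomial `(δ,γ,η,ν)`-solves random `k`-SAT: `μ` is a
probability measure, every slice is a degree-`D` polynomial with coefficients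
measurable in `ω`, and the success-probability and normalization conditions hold. -/
def RandomSolves (n m k D : ℕ) {Ω : Type u} [MeasurableSpace Ω] (μ : Measure Ω)
    (f : (Coords n m k → ℝ) → Ω → Fin n → ℝ) (δ γ η ν : ℝ) : Prop :=
  IsProbabilityMeasure μ ∧
  (∀ ω : Ω, IsDegPoly n m k D (fun x => f x ω)) ∧
  (∀ (x : Coords n m k → ℝ) (i : Fin n), Measurable (fun ω => f x ω i)) ∧
  (∀ Φ : Formula n m k, Integrable (fun ω => ∑ i, (f (encode Φ) ω i) ^ 2) μ) ∧
  1 - δ ≤ Eform n m k (fun Φ =>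
      (μ {ω | etaNuSat (fun i => roundR (f (encode Φ) ω i)) Φ η ν}).toReal) ∧
  Eform n m k (fun Φ => ∫ ω, (∑ i, (f (encode Φ) ω i) ^ 2) ∂μ) ≤ γ * n

/-! ## κ* -/

noncomputable def iota (β : ℝ) : ℝ := β / (1 - β * Real.exp (-(β - 1)))

noncomputable def kappaStar : ℝ := sInf (iota '' Set.Ioi 1)

/-! ## overlap profiles and entropies -/

/-- Binary entropy function (natural log, with `0·log 0 = 0`). -/
noncomputable def Hb (p : ℝ) : ℝ := Real.negMulLog p + Real.negMulLog (1 - p)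

/-- Number of coordinates whose agreement pattern is exactly `σ`. -/
noncomputable def patCount {n ℓ : ℕ} (Y : Fin ℓ → Fin n → Bool) (σ : Fin ℓ → Bool) : ℕ :=
  Nat.card {i : Fin n // ∀ t, Y t i = σ t}

/-- Entry of the overlap profile indexed by the unordered partition `{σ⁻¹(T), σ⁻¹(F)}`. -/
noncomputable def profFrac {n ℓ : ℕ} (Y : Fin ℓ → Fin n → Bool) (σ : Fin ℓ → Bool) : ℝ :=
  ((patCount Y σ : ℝ) + (patCount Y (fun t => !(σ t)) : ℝ)) / n

/-- Overlap entropy `H(π(Y))` (each unordered partition is counted twice in the sum,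
hence the factor `1/2`; valid for `ℓ ≥ 1` assignments). -/
noncomputable def overlapEntropy {n ℓ : ℕ} (Y : Fin ℓ → Fin n → Bool) : ℝ :=
  (1/2) * ∑ σ : Fin ℓ → Bool, Real.negMulLog (profFrac Y σ)

/-- The fraction `λ_{S,T}` of coordinates in the agreement set at which `x` is true. -/
noncomputable def lamFrac {n ℓ : ℕ} (x : Fin n → Bool) (Y : Fin ℓ → Fin n → Bool)
    (σ : Fin ℓ → Bool) : ℝ :=
  (Nat.card {i : Fin n // ((∀ t, Y t i = σ t) ∨ (∀ t, Y t i = !(σ t))) ∧ x i = true} : ℝ)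
    / ((patCount Y σ : ℝ) + (patCount Y (fun t => !(σ t)) : ℝ))

/-- Conditional overlap entropy `H(π(x | Y))`. -/
noncomputable def condOverlapEntropy {n ℓ : ℕ} (x : Fin n → Bool)
    (Y : Fin ℓ → Fin n → Bool) : ℝ :=
  (1/2) * ∑ σ : Fin ℓ → Bool, profFrac Y σ * Hb (lamFrac x Y σ)

/-- `H(π(y^ℓ | y^0, …, y^{ℓ-1}))` for an `ℕ`-indexed family of assignments. -/
noncomputable def condH {n : ℕ} (y : ℕ → Fin n → Bool) (ℓ : ℕ) : ℝ :=
  condOverlapEntropy (y ℓ) (fun t : Fin ℓ => y (t : ℕ))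

/-- `H(π(y^0, …, y^k))`. -/
noncomputable def ovH {n : ℕ} (y : ℕ → Fin n → Bool) (k : ℕ) : ℝ :=
  overlapEntropy (fun t : Fin (k+1) => y (t : ℕ))

/-- The energy term `E_{I ~ unif([n]^k)} |{y^ℓ[I] : 0 ≤ ℓ ≤ k}|`. -/
noncomputable def energy {n : ℕ} (k : ℕ) (y : ℕ → Fin n → Bool) : ℝ :=
  (∑ I : Fin k → Fin n,
      (((Finset.range (k+1)).image (fun ℓ => fun r => y ℓ (I r))).card : ℝ))
    / (Fintype.card (Fin k → Fin n) : ℝ)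

/-- Conditional overlap entropies of `y^1, …, y^k` within `[β₋ log k / k, β₊ log k / k]`. -/
def Admissible {n : ℕ} (k : ℕ) (βm βp : ℝ) (y : ℕ → Fin n → Bool) : Prop :=
  ∀ ℓ, 1 ≤ ℓ → ℓ ≤ k →
    condH y ℓ ∈ Set.Icc (βm * Real.log k / k) (βp * Real.log k / k)

/-! ## the interpolation path -/

/-- The interpolation path: step `t+1` resamples the literal at lexicographic
position `t % (km)` (0-indexed: clause `(t % km)/k`, position `(t % km) % k`)
to the value `w ⟨t, _⟩`. -/
def interpPath {n m k T : ℕ} (Φ0 : Formula n m k) (w : Fin T → Fin n × Bool) :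
    ℕ → Formula n m k
  | 0 => Φ0
  | t + 1 => fun a b =>
      if h : t < T ∧ (a : ℕ) = t % (k * m) / k ∧ (b : ℕ) = t % (k * m) % k
      then w ⟨t, h.1⟩
      else interpPath Φ0 w t a b

open Classical in
/-- Probability of an event of the interpolation path `Φ^(0), …, Φ^(T)`, where
`Φ^(0)` is uniform and all resampled literals are i.i.d. uniform. -/
noncomputable def Ppath (n m k T : ℕ) (A : (ℕ → Formula n m k) → Prop) : ℝ :=
  (∑ z : Formula n m k × (Fin T → Fin n × Bool),
      if A (interpPath z.1 z.2) then (1:ℝ) else 0)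
    / (Fintype.card (Formula n m k × (Fin T → Fin n × Bool)) : ℝ)

/-! ## stability of low-degree polynomials -/

/-- The pair `(Φ, Φ')` is `c`-bad with respect to `f`. -/
def cBad {n m k : ℕ} (f : (Coords n m k → ℝ) → Fin n → ℝ) (c : ℝ)
    (Φ Φ' : Formula n m k) : Prop :=
  c * Eform n m k (fun Ψ => ∑ i, (f (encode Ψ) i) ^ 2) <
    ∑ i, (f (encode Φ) i - f (encode Φ') i) ^ 2

/-- Replace the literal of `Φ` in clause `a`, position `b`, by `L`. -/
def updLit {n m k : ℕ} (Φ : Formula n m k) (a : Fin m) (b : Fin k)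
    (L : Fin n × Bool) : Formula n m k :=
  fun i j => if i = a ∧ j = b then L else Φ i j

open Classical in
/-- `λ_j`: the probability that resampling the literal at clause `a`, position `b`
(uniformly among the `2n-1` other literals) produces a `c`-bad pair. -/
noncomputable def lambdaPos {n m k : ℕ} (f : (Coords n m k → ℝ) → Fin n → ℝ) (c : ℝ)
    (a : Fin m) (b : Fin k) : ℝ :=
  (∑ Φ : Formula n m k, ∑ L : Fin n × Bool,
      if L ≠ Φ a b ∧ cBad f c Φ (updLit Φ a b L) then (1:ℝ) else 0)
    / ((Fintype.card (Formula n m k) : ℝ) * (2 * (n:ℝ) - 1))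

/-! ## the p/q quantities of the energy analysis -/

/-- The history vector `y^{≤j}_i = (y^1_i, …, y^j_i)`. -/
def hist {n : ℕ} (y : ℕ → Fin n → Bool) (j : ℕ) (i : Fin n) : Fin j → Bool :=
  fun t => y ((t : ℕ) + 1) i

/-- `φ_ℓ(b | ξ) = P_{i ~ unif([n])}[y^ℓ_i = b | y^{≤ℓ-1}_i = ξ]`. -/
noncomputable def phi {n : ℕ} (y : ℕ → Fin n → Bool) (ℓ : ℕ) (b : Bool)
    (ξ : Fin (ℓ - 1) → Bool) : ℝ :=
  (Nat.card {i : Fin n // y ℓ i = b ∧ hist y (ℓ - 1) i = ξ} : ℝ) /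
    (Nat.card {i : Fin n // hist y (ℓ - 1) i = ξ} : ℝ)

open Classical in
/-- `p_ℓ(σ) = P_{I ~ unif([n]^k)}[y^{ℓ'}[I] = σ for some 0 ≤ ℓ' ≤ ℓ]`. -/
noncomputable def pP {n : ℕ} (k : ℕ) (y : ℕ → Fin n → Bool) (ℓ : ℕ)
    (σ : Fin k → Bool) : ℝ :=
  (∑ I : Fin k → Fin n, if ∃ ℓ' ≤ ℓ, ∀ r, y ℓ' (I r) = σ r then (1:ℝ) else 0)
    / (Fintype.card (Fin k → Fin n) : ℝ)

open Classical in
/-- `Q_ℓ(σ, I)`: the truncated conditional probability that `y^ℓ[I] = σ`. -/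
noncomputable def Qfun {n k : ℕ} (y : ℕ → Fin n → Bool) (ℓ : ℕ) (σ : Fin k → Bool)
    (I : Fin k → Fin n) : ℝ :=
  if (∏ r, phi y ℓ (σ r) (hist y (ℓ - 1) (I r))) ≤ 1 / ((k:ℝ) * Real.log k)
  then ∏ r, phi y ℓ (σ r) (hist y (ℓ - 1) (I r)) else 0

/-- `q_ℓ(σ) = E_{I ~ unif([n]^k)}[Q_ℓ(σ, I)]`. -/
noncomputable def qfun {n k : ℕ} (y : ℕ → Fin n → Bool) (ℓ : ℕ) (σ : Fin k → Bool) : ℝ :=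
  (∑ I : Fin k → Fin n, Qfun y ℓ σ I) / (Fintype.card (Fin k → Fin n) : ℝ)

/-! ## lazy random walk on a product graph -/

/-- Lazy random walk on `Σ^J`: step `t+1` resamples coordinate `σ (t+1)` to `u ⟨t, _⟩`. -/
def walk {S : Type u} {J : Type*} [DecidableEq J] {T : ℕ} (v0 : J → S) (σ : ℕ → J)
    (u : Fin T → S) : ℕ → (J → S)
  | 0 => v0
  | t + 1 => if h : t < T then Function.update (walk v0 σ u t) (σ (t+1)) (u ⟨t, h⟩)
             else walk v0 σ u t

open Classical in
/-- `λ_j`: fraction of edges in direction `j` that are bad. -/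
noncomputable def lambdaDir {S : Type u} [Fintype S] {J : ℕ}
    (B : (Fin J → S) → (Fin J → S) → Prop) (j : Fin J) : ℝ :=
  (∑ v : Fin J → S, ∑ s : S,
      if s ≠ v j ∧ B v (Function.update v j s) then (1:ℝ) else 0)
    / ((Fintype.card (Fin J → S) : ℝ) * ((Fintype.card S : ℝ) - 1))

open Classical in
/-- Probability that no step of the lazy random walk traverses a bad edge. -/
noncomputable def PwalkGood {S : Type u} [Fintype S] (J T : ℕ)
    (B : (Fin J → S) → (Fin J → S) → Prop) (σ : ℕ → Fin J) : ℝ :=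
  (∑ z : (Fin J → S) × (Fin T → S),
      if ∀ t, 1 ≤ t → t ≤ T →
          (walk z.1 σ z.2 t = walk z.1 σ z.2 (t-1) ∨
           ¬ B (walk z.1 σ z.2 (t-1)) (walk z.1 σ z.2 t))
      then (1:ℝ) else 0)
    / (Fintype.card ((Fin J → S) × (Fin T → S)) : ℝ)

/-! ## block interpolation -/

/-- The index `i` of the segment `[s_i, s_{i+1})` containing `r`. -/
def psiIdx (s : ℕ → ℕ) (k r : ℕ) : ℕ := Nat.findGreatest (fun i => s i ≤ r) k

/-- `Ψ^ℓ`: concatenation of the blocks `ξ_i^{max(ℓ-i,0)}`, realized on the canonical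
product space of `(k+1)²` independent `μ^{⊗M}`-samples. -/
def Psi {Υ : Type u} (s : ℕ → ℕ) (k M : ℕ)
    (ω : Fin (k+1) × Fin (k+1) → Fin M → Υ) (ℓ : ℕ) : Fin M → Υ :=
  fun r => ω (⟨min (psiIdx s k (r : ℕ)) k, by omega⟩,
              ⟨min (ℓ - psiIdx s k (r : ℕ)) k, by omega⟩) r

/-! Fixing the randomness `ω` turns `f` into a deterministic degree-`D` polynomial, whose failure
probability and expected squared norm are nonnegative functions of `ω` with means at most `δ` and
`γ n`. By Markov's inequality each exceeds three times its mean with probability at most `1/3`, so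
some `ω` avoids both. -/

section Markov

variable {Ω : Type*} [MeasurableSpace Ω] {μ : Measure Ω}

-- The strict inequality matters when `a = 0`: then `X = 0` a.e. and the event is null.
lemma measureReal_mul_lt_le_of_integral_le [IsFiniteMeasure μ] {X : Ω → ℝ}
    (hX : 0 ≤ᵐ[μ] X) (hXi : Integrable X μ) {a c : ℝ} (hc : 0 < c)
    (ha : ∫ ω, X ω ∂μ ≤ a) : μ.real {ω | c * a < X ω} ≤ 1 / c := by
  rcases ((integral_nonneg_of_ae hX).trans ha).eq_or_lt with rfl | ha_pos
  · have hX0 : X =ᵐ[μ] 0 :=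
      (integral_eq_zero_iff_of_nonneg_ae hX hXi).mp (le_antisymm ha (integral_nonneg_of_ae hX))
    have hnull : μ {ω | c * 0 < X ω} = 0 := by
      refine measure_mono_null (fun ω hω => ?_) (ae_iff.mp hX0)
      simp_all [ne_of_gt]
    rw [measureReal_def, hnull, ENNReal.toReal_zero]
    exact (one_div_pos.mpr hc).le
  · have hmarkov := mul_meas_ge_le_integral_of_nonneg hX hXi (c * a)
    have hsub : μ.real {ω | c * a < X ω} ≤ μ.real {ω | c * a ≤ X ω} :=
      measureReal_mono fun ω (hω : c * a < X ω) => hω.le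
    rw [le_div_iff₀ hc]
    by_contra! hbig
    nlinarith [mul_le_mul_of_nonneg_left hsub (mul_pos hc ha_pos).le]

lemma exists_le_mul_and_le_mul_of_integral_le [IsProbabilityMeasure μ] {X Y : Ω → ℝ}
    (hX : 0 ≤ᵐ[μ] X) (hXi : Integrable X μ) (hY : 0 ≤ᵐ[μ] Y) (hYi : Integrable Y μ)
    {a b c d : ℝ} (hc : 0 < c) (hd : 0 < d) (hcd : 1 / c + 1 / d < 1)
    (ha : ∫ ω, X ω ∂μ ≤ a) (hb : ∫ ω, Y ω ∂μ ≤ b) :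
    ∃ ω, X ω ≤ c * a ∧ Y ω ≤ d * b := by
  by_contra! h
  have hcover : Set.univ ⊆ {ω | c * a < X ω} ∪ {ω | d * b < Y ω} := fun ω _ => by
    by_cases hω : X ω ≤ c * a
    · exact Or.inr (h ω hω)
    · exact Or.inl (not_le.mp hω)
  have := (measureReal_mono (μ := μ) hcover).trans (measureReal_union_le _ _)
  rw [probReal_univ] at this
  linarith [measureReal_mul_lt_le_of_integral_le hX hXi hc ha,
    measureReal_mul_lt_le_of_integral_le hY hYi hd hb]

end Markov

lemma measurableSet_setOf_roundR_eq (c : Option Bool) : MeasurableSet {x : ℝ | roundR x = c} := by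
  rcases c with _ | _ | _ <;>
    [convert measurableSet_Ioo (a := (-1 : ℝ)) (b := 1) using 1;
     convert measurableSet_Iic (a := (-1 : ℝ)) using 1;
     convert measurableSet_Ici (a := (1 : ℝ)) using 1] <;>
  · ext x
    simp only [Set.mem_ofPred_eq, Set.mem_Ioo, Set.mem_Iic, Set.mem_Ici, roundR]
    split_ifs <;> grind

lemma measurableSet_setOf_roundR {Ω ι : Type*} [MeasurableSpace Ω] [Finite ι]
    {g : Ω → ι → ℝ} (hg : ∀ i, Measurable fun ω => g ω i) (P : (ι → Option Bool) → Prop) :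
    MeasurableSet {ω | P fun i => roundR (g ω i)} := by
  have hunion : {ω | P fun i => roundR (g ω i)} =
      ⋃ v ∈ {v | P v}, ⋂ i, (fun ω => g ω i) ⁻¹' {x | roundR x = v i} := by
    ext ω
    simp only [Set.mem_ofPred_eq, Set.mem_iUnion, Set.mem_iInter, Set.mem_preimage, exists_prop]
    exact ⟨fun h => ⟨_, h, fun _ => rfl⟩, fun ⟨v, hv, he⟩ => funext he ▸ hv⟩
  rw [hunion]
  exact MeasurableSet.biUnion (Set.to_countable _) fun v _ =>
    MeasurableSet.iInter fun i => hg i (measurableSet_setOf_roundR_eq (v i))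

section UniformFormula

variable {n m k : ℕ}

lemma Eform_nonneg {g : Formula n m k → ℝ} (hg : ∀ Φ, 0 ≤ g Φ) : 0 ≤ Eform n m k g :=
  div_nonneg (Finset.sum_nonneg fun Φ _ => hg Φ) (Nat.cast_nonneg _)

lemma Pform_le_one (A : Formula n m k → Prop) : Pform n m k A ≤ 1 := by
  classical
  refine div_le_one_of_le₀ ?_ (Nat.cast_nonneg _)
  calc ∑ Φ, (if A Φ then (1 : ℝ) else 0) ≤ ∑ _Φ : Formula n m k, (1 : ℝ) :=
        Finset.sum_le_sum fun Φ _ => by split_ifs <;> norm_num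
    _ = Fintype.card (Formula n m k) := by simp

lemma Pform_eq_Eform_indicator {Ω : Type*} (P : Formula n m k → Ω → Prop) (ω : Ω) :
    Pform n m k (fun Φ => P Φ ω) = Eform n m k fun Φ => {ω | P Φ ω}.indicator 1 ω := by
  classical
  simp only [Pform, Set.indicator_apply, Set.mem_ofPred_eq, Pi.one_apply]

variable {Ω : Type*} [MeasurableSpace Ω] {μ : Measure Ω}

lemma integrable_Eform {g : Formula n m k → Ω → ℝ} (hg : ∀ Φ, Integrable (g Φ) μ) :
    Integrable (fun ω => Eform n m k fun Φ => g Φ ω) μ :=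
  (integrable_finsetSum _ fun Φ _ => hg Φ).div_const _

lemma integral_Eform {g : Formula n m k → Ω → ℝ} (hg : ∀ Φ, Integrable (g Φ) μ) :
    ∫ ω, Eform n m k (fun Φ => g Φ ω) ∂μ = Eform n m k fun Φ => ∫ ω, g Φ ω ∂μ := by
  simp only [Eform]
  rw [integral_div, integral_finsetSum _ fun Φ _ => hg Φ]

lemma integrable_Pform [IsFiniteMeasure μ] {P : Formula n m k → Ω → Prop}
    (hP : ∀ Φ, MeasurableSet {ω | P Φ ω}) :
    Integrable (fun ω => Pform n m k fun Φ => P Φ ω) μ := by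
  simp only [Pform_eq_Eform_indicator]
  exact integrable_Eform fun Φ => (integrable_const 1).indicator (hP Φ)

lemma integral_Pform [IsFiniteMeasure μ] {P : Formula n m k → Ω → Prop}
    (hP : ∀ Φ, MeasurableSet {ω | P Φ ω}) :
    ∫ ω, Pform n m k (fun Φ => P Φ ω) ∂μ = Eform n m k fun Φ => μ.real {ω | P Φ ω} := by
  simp only [Pform_eq_Eform_indicator]
  rw [integral_Eform (g := fun Φ => {ω | P Φ ω}.indicator 1) fun Φ =>
    (integrable_const 1).indicator (hP Φ)]
  simp only [integral_indicator_one (hP _)]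

end UniformFormula

theorem statement3_general {Ω : Type u} [MeasurableSpace Ω] (μ : Measure Ω)
    (n m k D : ℕ)
    (δ γ η ν : ℝ)
    (f : (Coords n m k → ℝ) → Ω → Fin n → ℝ)
    (hf : RandomSolves n m k D μ f δ γ η ν) :
    ∃ g : (Coords n m k → ℝ) → Fin n → ℝ,
      DetSolves n m k D g (3 * δ) (3 * γ) η ν := by
  obtain ⟨hprob, hpoly, hmeas, hint, hsucc, hnorm⟩ := hf
  set succ : Ω → ℝ := fun ω =>
    Pform n m k fun Φ => etaNuSat (fun i => roundR (f (encode Φ) ω i)) Φ η ν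
  have hevent : ∀ Φ : Formula n m k,
      MeasurableSet {ω | etaNuSat (fun i => roundR (f (encode Φ) ω i)) Φ η ν} := fun Φ =>
    measurableSet_setOf_roundR (fun i => hmeas _ i) (fun v => etaNuSat v Φ η ν)
  have hsucc_int : Integrable succ μ := integrable_Pform hevent
  have hfail_mean : ∫ ω, 1 - succ ω ∂μ ≤ δ := by
    rw [integral_sub (integrable_const 1) hsucc_int, integral_const, probReal_univ,
      integral_Pform hevent]
    simp only [measureReal_def, smul_eq_mul, mul_one]
    linarith
  obtain ⟨ω, hfail, hsq⟩ := exists_le_mul_and_le_mul_of_integral_le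
    (ae_of_all μ fun ω => sub_nonneg.mpr (Pform_le_one _)) ((integrable_const 1).sub hsucc_int)
    (ae_of_all μ fun ω => Eform_nonneg fun Φ => Finset.sum_nonneg fun i _ => sq_nonneg _)
    (integrable_Eform hint) three_pos three_pos (by norm_num) hfail_mean
    ((integral_Eform hint).trans_le hnorm)
  exact ⟨fun x => f x ω, hpoly ω, by linarith, by linarith⟩

theorem statement3 {Ω : Type u} [MeasurableSpace Ω] (μ : Measure Ω)
    (n m k D : ℕ) (hn : 0 < n) (hm : 0 < m) (hk : 0 < k) (hD : 0 < D)
    (δ γ η ν : ℝ) (hδ : δ ∈ Set.Icc (0:ℝ) 1) (hη : η ∈ Set.Icc (0:ℝ) 1)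
    (hν : ν ∈ Set.Icc (0:ℝ) 1) (hγ : 1 ≤ γ)
    (f : (Coords n m k → ℝ) → Ω → Fin n → ℝ)
    (hf : RandomSolves n m k D μ f δ γ η ν) :
    ∃ g : (Coords n m k → ℝ) → Fin n → ℝ,
      DetSolves n m k D g (3 * δ) (3 * γ) η ν :=
  statement3_general μ n m k D δ γ η ν f hf
end

section
/- Let n ≥ 1 and ℓ ≥ 1 be integers and let x, x', y^0,…,y^{ℓ−1} ∈ {T,F}^n. If Δ(x,x') ≤ 1/2, then |H(π(x | y^0,…,y^{ℓ−1})) − H(π(x' | y^0,…,y^{ℓ−1}))| ≤ H_b(Δ(x,x')). -/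
open MeasureTheory Finset Filter ProbabilityTheory

universe u

/-!
Both conditional entropies are averages of `H_b(λ_{S,T})` with the weights `π_{S,T}`.
Being concave with `H_b(0) = 0`, `H_b` is subadditive, and together with `H_b(1 - p) = H_b(p)`
this gives `|H_b(p) - H_b(q)| ≤ H_b(|p - q|)`. By Jensen the average of
`H_b(|λ_{S,T} - λ'_{S,T}|)` is at most `H_b` of the average of `|λ_{S,T} - λ'_{S,T}|`, and that
average is at most `Δ(x, x')`: `π_{S,T} |λ_{S,T} - λ'_{S,T}|` is at most the fraction of
coordinates of the agreement set of `{S,T}` where `x` and `x'` differ, and each coordinate lies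
in the agreement set of only one partition. Monotonicity of `H_b` on `[0, 1/2]` concludes.
-/

theorem ConcaveOn.mul_le_map_mul {s : Set ℝ} {f : ℝ → ℝ} (hf : ConcaveOn ℝ s f) (h0 : 0 ∈ s)
    (hf0 : 0 ≤ f 0) {x t : ℝ} (hx : x ∈ s) (ht₀ : 0 ≤ t) (ht₁ : t ≤ 1) :
    t * f x ≤ f (t * x) := by
  have := hf.2 h0 hx (sub_nonneg.2 ht₁) ht₀ (by ring)
  simp only [smul_eq_mul, mul_zero, zero_add] at this
  linarith [mul_nonneg (sub_nonneg.2 ht₁) hf0]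

theorem ConcaveOn.map_add_le {s : Set ℝ} {f : ℝ → ℝ} (hf : ConcaveOn ℝ s f) (h0 : 0 ∈ s)
    (hf0 : 0 ≤ f 0) {a b : ℝ} (ha : 0 ≤ a) (hb : 0 ≤ b) (hab : a + b ∈ s) :
    f (a + b) ≤ f a + f b := by
  rcases (add_nonneg ha hb).eq_or_lt with hc | hc
  · obtain ⟨rfl, rfl⟩ : a = 0 ∧ b = 0 := ⟨by linarith, by linarith⟩
    simpa using hf0
  have hfa := hf.mul_le_map_mul h0 hf0 hab (t := a / (a + b)) (by positivity)
    ((div_le_one hc).2 (by linarith))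
  have hfb := hf.mul_le_map_mul h0 hf0 hab (t := b / (a + b)) (by positivity)
    ((div_le_one hc).2 (by linarith))
  rw [div_mul_cancel₀ _ hc.ne'] at hfa hfb
  calc f (a + b) = a / (a + b) * f (a + b) + b / (a + b) * f (a + b) := by
        field_simp
    _ ≤ f a + f b := add_le_add hfa hfb

namespace Real

theorem binEntropy_add_le {a b : ℝ} (ha : 0 ≤ a) (hb : 0 ≤ b) (hab : a + b ≤ 1) :
    binEntropy (a + b) ≤ binEntropy a + binEntropy b :=
  strictConcave_binEntropy.concaveOn.map_add_le (by simp) (by simp) ha hb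
    ⟨by linarith, hab⟩

theorem binEntropy_le_add_binEntropy_abs_sub {p q : ℝ} (hp : p ∈ Set.Icc (0 : ℝ) 1)
    (hq : q ∈ Set.Icc (0 : ℝ) 1) : binEntropy q ≤ binEntropy p + binEntropy |q - p| := by
  obtain ⟨hp₀, hp₁⟩ := hp
  obtain ⟨hq₀, hq₁⟩ := hq
  rcases le_total p q with hpq | hqp
  · rw [abs_of_nonneg (sub_nonneg.2 hpq)]
    simpa using binEntropy_add_le hp₀ (sub_nonneg.2 hpq) (by linarith)
  · rw [abs_of_nonpos (sub_nonpos.2 hqp), neg_sub, ← binEntropy_one_sub q,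
      ← binEntropy_one_sub p]
    simpa [sub_add_sub_cancel'] using
      binEntropy_add_le (sub_nonneg.2 hp₁) (sub_nonneg.2 hqp) (by linarith)

theorem abs_binEntropy_sub_le {p q : ℝ} (hp : p ∈ Set.Icc (0 : ℝ) 1)
    (hq : q ∈ Set.Icc (0 : ℝ) 1) : |binEntropy p - binEntropy q| ≤ binEntropy |p - q| := by
  have hpq := binEntropy_le_add_binEntropy_abs_sub hq hp
  have hqp := binEntropy_le_add_binEntropy_abs_sub hp hq
  rw [abs_sub_comm q p] at hqp
  exact abs_sub_le_iff.2 ⟨by linarith, by linarith⟩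

end Real

theorem Hb_eq_binEntropy : Hb = Real.binEntropy :=
  funext fun p => (Real.binEntropy_eq_negMulLog_add_negMulLog_one_sub p).symm

theorem Finset.card_filter_le_card_filter_add_card_filter_ne {α : Type*} [DecidableEq α]
    (s : Finset α) (f g : α → Bool) :
    #{i ∈ s | f i = true} ≤ #{i ∈ s | g i = true} + #{i ∈ s | f i ≠ g i} := by
  refine (card_le_card fun i hi => ?_).trans (card_union_le _ _)
  simp only [mem_filter, mem_union] at hi ⊢
  cases hg : g i <;> simp_all

section OverlapProfile

variable {n ℓ : ℕ}

/-- The agreement set of the unordered partition `{σ⁻¹(T), σ⁻¹(F)}`. -/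
def agreeSet (Y : Fin ℓ → Fin n → Bool) (σ : Fin ℓ → Bool) : Finset (Fin n) :=
  {i | (∀ t, Y t i = σ t) ∨ (∀ t, Y t i = !(σ t))}

theorem patCount_eq_card (Y : Fin ℓ → Fin n → Bool) (σ : Fin ℓ → Bool) :
    patCount Y σ = #{i | ∀ t, Y t i = σ t} := by
  rw [patCount, Nat.card_eq_fintype_card, Fintype.card_subtype]

theorem sum_patCount (Y : Fin ℓ → Fin n → Bool) : ∑ σ, patCount Y σ = n := by
  have h := card_eq_sum_card_fiberwise (s := univ) (t := univ)
    (f := fun i : Fin n => fun t => Y t i) fun _ _ => mem_univ _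
  simp only [card_univ, Fintype.card_fin] at h
  simp only [h, patCount_eq_card, funext_iff]

theorem sum_profFrac (hn : n ≠ 0) (Y : Fin ℓ → Fin n → Bool) : ∑ σ, profFrac Y σ = 2 := by
  have hneg : ∑ σ : Fin ℓ → Bool, patCount Y (fun t => !(σ t)) = n := by
    have hinv : Function.Involutive fun σ : Fin ℓ → Bool => fun t => !(σ t) :=
      fun σ => funext fun t => Bool.not_not (σ t)
    exact (Fintype.sum_equiv hinv.toPerm _ (patCount Y) fun _ => rfl).trans (sum_patCount Y)
  simp only [profFrac, ← sum_div, sum_add_distrib, ← Nat.cast_sum, sum_patCount, hneg]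
  field_simp
  ring

theorem profFrac_nonneg (Y : Fin ℓ → Fin n → Bool) (σ : Fin ℓ → Bool) : 0 ≤ profFrac Y σ := by
  rw [profFrac]
  positivity

theorem card_agreeSet_le (Y : Fin ℓ → Fin n → Bool) (σ : Fin ℓ → Bool) :
    #(agreeSet Y σ) ≤ patCount Y σ + patCount Y (fun t => !(σ t)) := by
  rw [patCount_eq_card, patCount_eq_card, agreeSet, filter_or]
  exact card_union_le _ _

theorem lamFrac_eq (x : Fin n → Bool) (Y : Fin ℓ → Fin n → Bool) (σ : Fin ℓ → Bool) :
    lamFrac x Y σ = #{i ∈ agreeSet Y σ | x i = true} /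
      ((patCount Y σ : ℝ) + patCount Y (fun t => !(σ t))) := by
  rw [lamFrac, Nat.card_eq_fintype_card, Fintype.card_subtype, agreeSet, filter_filter]

theorem lamFrac_mem_Icc (x : Fin n → Bool) (Y : Fin ℓ → Fin n → Bool) (σ : Fin ℓ → Bool) :
    lamFrac x Y σ ∈ Set.Icc (0 : ℝ) 1 := by
  rw [lamFrac_eq]
  refine ⟨by positivity, div_le_one_of_le₀ ?_ (by positivity)⟩
  exact_mod_cast (card_filter_le _ _).trans (card_agreeSet_le Y σ)

theorem profFrac_mul_abs_lamFrac_sub_le (x x' : Fin n → Bool) (Y : Fin ℓ → Fin n → Bool)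
    (σ : Fin ℓ → Bool) :
    profFrac Y σ * |lamFrac x Y σ - lamFrac x' Y σ| ≤
      #{i ∈ agreeSet Y σ | x i ≠ x' i} / n := by
  have hT : (#{i ∈ agreeSet Y σ | x i = true} : ℝ) ≤
      #{i ∈ agreeSet Y σ | x' i = true} + #{i ∈ agreeSet Y σ | x i ≠ x' i} := by
    exact_mod_cast card_filter_le_card_filter_add_card_filter_ne (agreeSet Y σ) x x'
  have hT' : (#{i ∈ agreeSet Y σ | x' i = true} : ℝ) ≤
      #{i ∈ agreeSet Y σ | x i = true} + #{i ∈ agreeSet Y σ | x i ≠ x' i} := by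
    simp only [ne_comm (a := x _)]
    exact_mod_cast card_filter_le_card_filter_add_card_filter_ne (agreeSet Y σ) x' x
  have habs : |(#{i ∈ agreeSet Y σ | x i = true} : ℝ) - #{i ∈ agreeSet Y σ | x' i = true}|
      ≤ #{i ∈ agreeSet Y σ | x i ≠ x' i} :=
    abs_sub_le_iff.2 ⟨by linarith, by linarith⟩
  rcases (show (0 : ℝ) ≤ (patCount Y σ : ℝ) + patCount Y (fun t => !(σ t)) by
    positivity).eq_or_lt with hN | hN
  · rw [profFrac, ← hN, zero_div, zero_mul]
    positivity
  calc profFrac Y σ * |lamFrac x Y σ - lamFrac x' Y σ|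
      = |(#{i ∈ agreeSet Y σ | x i = true} : ℝ) - #{i ∈ agreeSet Y σ | x' i = true}| / n := by
        rw [profFrac, lamFrac_eq, lamFrac_eq, ← sub_div, abs_div, abs_of_pos hN]
        field_simp
    _ ≤ _ := div_le_div_of_nonneg_right habs (Nat.cast_nonneg n)

theorem card_filter_mem_agreeSet_le_two (Y : Fin ℓ → Fin n → Bool) (i : Fin n) :
    #{σ | i ∈ agreeSet Y σ} ≤ 2 := by
  refine (card_le_card (t := {fun t => Y t i, fun t => !(Y t i)}) fun σ hσ => ?_).trans
    card_le_two
  simp only [agreeSet, mem_filter, mem_univ, true_and, mem_insert, mem_singleton] at hσ ⊢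
  refine hσ.imp (fun h => funext fun t => (h t).symm) fun h => funext fun t => ?_
  simp [h t]

theorem sum_card_filter_agreeSet_le (Y : Fin ℓ → Fin n → Bool) (p : Fin n → Prop)
    [DecidablePred p] : ∑ σ, #{i ∈ agreeSet Y σ | p i} ≤ 2 * #{i | p i} := by
  calc ∑ σ, #{i ∈ agreeSet Y σ | p i}
      = ∑ σ, #((univ.filter p).bipartiteAbove (fun σ i => i ∈ agreeSet Y σ) σ) := by
        refine sum_congr rfl fun σ _ => congrArg card ?_
        ext i
        simp [bipartiteAbove, and_comm]
    _ = ∑ i ∈ {i | p i}, #{σ | i ∈ agreeSet Y σ} :=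
        sum_card_bipartiteAbove_eq_sum_card_bipartiteBelow _
    _ ≤ ∑ _i ∈ {i | p i}, 2 := sum_le_sum fun i _ => card_filter_mem_agreeSet_le_two Y i
    _ = 2 * #{i | p i} := by rw [sum_const, smul_eq_mul, mul_comm]

theorem sum_profFrac_mul_abs_lamFrac_sub_le (x x' : Fin n → Bool) (Y : Fin ℓ → Fin n → Bool) :
    ∑ σ, profFrac Y σ * |lamFrac x Y σ - lamFrac x' Y σ| ≤ 2 * hamΔ x x' := by
  have hham : hamΔ x x' = #{i | x i ≠ x' i} / n := by
    rw [hamΔ, Nat.card_eq_fintype_card, Fintype.card_subtype]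
  calc ∑ σ, profFrac Y σ * |lamFrac x Y σ - lamFrac x' Y σ|
      ≤ ∑ σ, (#{i ∈ agreeSet Y σ | x i ≠ x' i} : ℝ) / n :=
        sum_le_sum fun σ _ => profFrac_mul_abs_lamFrac_sub_le x x' Y σ
    _ ≤ 2 * hamΔ x x' := by
        rw [← sum_div, hham, mul_div_assoc']
        gcongr
        exact_mod_cast sum_card_filter_agreeSet_le Y _

theorem abs_lamFrac_sub_mem_Icc (x x' : Fin n → Bool) (Y : Fin ℓ → Fin n → Bool)
    (σ : Fin ℓ → Bool) : |lamFrac x Y σ - lamFrac x' Y σ| ∈ Set.Icc (0 : ℝ) 1 := by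
  obtain ⟨h₀, h₁⟩ := lamFrac_mem_Icc x Y σ
  obtain ⟨h₀', h₁'⟩ := lamFrac_mem_Icc x' Y σ
  exact ⟨abs_nonneg _, abs_sub_le_iff.2 ⟨by linarith, by linarith⟩⟩

theorem abs_condOverlapEntropy_sub_le (x x' : Fin n → Bool) (Y : Fin ℓ → Fin n → Bool) :
    |condOverlapEntropy x Y - condOverlapEntropy x' Y| ≤
      ∑ σ, profFrac Y σ / 2 * Real.binEntropy |lamFrac x Y σ - lamFrac x' Y σ| := by
  have hdiff : condOverlapEntropy x Y - condOverlapEntropy x' Y = ∑ σ, profFrac Y σ / 2 *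
      (Real.binEntropy (lamFrac x Y σ) - Real.binEntropy (lamFrac x' Y σ)) := by
    simp only [condOverlapEntropy, Hb_eq_binEntropy, ← mul_sub, ← sum_sub_distrib, mul_sum]
    exact sum_congr rfl fun σ _ => by ring
  rw [hdiff]
  refine (abs_sum_le_sum_abs _ _).trans (sum_le_sum fun σ _ => ?_)
  have hw : 0 ≤ profFrac Y σ / 2 := div_nonneg (profFrac_nonneg Y σ) zero_le_two
  rw [abs_mul, abs_of_nonneg hw]
  exact mul_le_mul_of_nonneg_left
    (Real.abs_binEntropy_sub_le (lamFrac_mem_Icc x Y σ) (lamFrac_mem_Icc x' Y σ)) hw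

end OverlapProfile

theorem statement8_general (n ℓ : ℕ) (hn : 1 ≤ n)
    (x x' : Fin n → Bool) (y : Fin ℓ → Fin n → Bool)
    (h : hamΔ x x' ≤ 1/2) :
    |condOverlapEntropy x y - condOverlapEntropy x' y| ≤ Hb (hamΔ x x') := by
  have hw : ∀ σ ∈ univ, 0 ≤ profFrac y σ / 2 := fun σ _ =>
    div_nonneg (profFrac_nonneg y σ) zero_le_two
  have hw₁ : ∑ σ, profFrac y σ / 2 = 1 := by
    rw [← sum_div, sum_profFrac (by omega) y, div_self two_ne_zero]
  have hmean : ∑ σ, profFrac y σ / 2 * |lamFrac x y σ - lamFrac x' y σ| ≤ hamΔ x x' := by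
    have := sum_profFrac_mul_abs_lamFrac_sub_le x x' y
    simp only [div_mul_eq_mul_div, ← sum_div]
    linarith
  have h₀ : 0 ≤ ∑ σ, profFrac y σ / 2 * |lamFrac x y σ - lamFrac x' y σ| :=
    sum_nonneg fun σ hσ => mul_nonneg (hw σ hσ) (abs_nonneg _)
  rw [Hb_eq_binEntropy]
  calc |condOverlapEntropy x y - condOverlapEntropy x' y|
      ≤ ∑ σ, profFrac y σ / 2 * Real.binEntropy |lamFrac x y σ - lamFrac x' y σ| :=
        abs_condOverlapEntropy_sub_le x x' y
    _ ≤ Real.binEntropy (∑ σ, profFrac y σ / 2 * |lamFrac x y σ - lamFrac x' y σ|) := by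
        simpa only [smul_eq_mul] using Real.strictConcave_binEntropy.concaveOn.le_map_sum hw hw₁
          fun σ _ => abs_lamFrac_sub_mem_Icc x x' y σ
    _ ≤ Real.binEntropy (hamΔ x x') :=
        Real.binEntropy_strictMonoOn.monotoneOn ⟨h₀, by linarith⟩ ⟨h₀.trans hmean, by linarith⟩
          hmean

theorem statement8 (n ℓ : ℕ) (hn : 1 ≤ n) (hℓ : 1 ≤ ℓ)
    (x x' : Fin n → Bool) (y : Fin ℓ → Fin n → Bool)
    (h : hamΔ x x' ≤ 1/2) :
    |condOverlapEntropy x y - condOverlapEntropy x' y| ≤ Hb (hamΔ x x') :=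
  statement8_general n ℓ hn x x' y h
end

section
/- With the notation below: for every σ ∈ {T,F}^k, p_k(σ) ≥ (1 − 1/log k)·Σ_{ℓ=1}^k q_ℓ(σ). -/
open MeasureTheory Finset Filter ProbabilityTheory

universe u

/-! Let `H_j = n^k p_j(σ)` count the `I` with `y^{ℓ'}[I] = σ` for some `ℓ' ≤ j`.
Fix `ℓ` and split the `I` according to whether `σ` was already hit by `y^0, …, y^{ℓ-1}`. On the
hit ones `Q_ℓ ≤ 1/(k log k)`. On the others `Q_ℓ ≤ ∏ φ_ℓ`; since `y^0` is all-`T`, being hit is a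
function of the histories `y^{≤ℓ-1}[I]`, so averaging `∏ φ_ℓ` over them counts exactly the `I`
first hit at step `ℓ`, i.e. `H_ℓ - H_{ℓ-1}`. Summing over `ℓ`
gives `∑ q_ℓ ≤ (1 + 1/log k) p_k`, and `(1 - 1/log k)(1 + 1/log k) ≤ 1`. -/

theorem Finset.sum_Icc_one_sub_pred {M : Type*} [AddCommGroup M] (f : ℕ → M) (k : ℕ) :
    ∑ ℓ ∈ Finset.Icc 1 k, (f ℓ - f (ℓ - 1)) = f k - f 0 := by
  induction k with
  | zero => simp
  | succ k ih =>
    rw [Finset.sum_Icc_succ_top (Nat.le_add_left 1 k), ih, Nat.add_sub_cancel]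
    abel

theorem Finset.sum_prod_mul_comp_eq_of_sum_fiber_eq {R ι β K : Type*} [CommSemiring R]
    [Fintype ι] [Fintype K] [DecidableEq K] [Fintype β] [DecidableEq β]
    (h : ι → β) (w v : K → ι → R)
    (hwv : ∀ r b, ∑ i with h i = b, w r i = ∑ i with h i = b, v r i) (G : (K → β) → R) :
    ∑ I : K → ι, (∏ r, w r (I r)) * G (h ∘ I) = ∑ I : K → ι, (∏ r, v r (I r)) * G (h ∘ I) := by
  suffices key : ∀ u : K → ι → R, ∑ I : K → ι, (∏ r, u r (I r)) * G (h ∘ I)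
      = ∑ ξ : K → β, (∏ r, ∑ i with h i = ξ r, u r i) * G ξ by
    simp only [key, hwv]
  intro u
  rw [← Finset.sum_fiberwise _ (h ∘ ·)]
  refine Finset.sum_congr rfl fun ξ _ => ?_
  have hfiber : ({I | h ∘ I = ξ} : Finset (K → ι))
      = Fintype.piFinset fun r => ({i | h i = ξ r} : Finset ι) := by
    ext I
    simp [Fintype.mem_piFinset, funext_iff]
  rw [Finset.prod_univ_sum, ← hfiber, Finset.sum_mul]
  refine Finset.sum_congr rfl fun I hI => ?_
  rw [(Finset.mem_filter.mp hI).2]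

section Energy

variable {n k : ℕ} (y : ℕ → Fin n → Bool) (σ : Fin k → Bool)

theorem sum_fiber_phi (ℓ : ℕ) (b : Bool) (ξ : Fin (ℓ - 1) → Bool) :
    ∑ i with hist y (ℓ - 1) i = ξ, phi y ℓ b ξ
      = ∑ i with hist y (ℓ - 1) i = ξ, if y ℓ i = b then (1 : ℝ) else 0 := by
  rw [Finset.sum_const, nsmul_eq_mul, Finset.sum_boole, Finset.filter_filter, phi,
    Nat.card_eq_fintype_card, Fintype.card_subtype, Nat.card_eq_fintype_card,
    Fintype.card_subtype]
  rcases Nat.eq_zero_or_pos #({i | hist y (ℓ - 1) i = ξ} : Finset (Fin n)) with h0 | hpos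
  · have hsub : ({i | hist y (ℓ - 1) i = ξ ∧ y ℓ i = b} : Finset (Fin n)) = ∅ := by
      rw [Finset.card_eq_zero] at h0
      exact Finset.filter_eq_empty_iff.mpr fun i _ hi =>
        Finset.filter_eq_empty_iff.mp h0 (Finset.mem_univ i) hi.1
    simp [h0, hsub]
  · rw [mul_div_cancel₀ _ (by positivity)]
    congr 3
    ext i
    exact and_comm

/-- The coordinates of `I` are independent, so against any function of the histories
`y^{≤ℓ-1}[I]` the weight `∏ φ_ℓ` averages like the indicator of `y^ℓ[I] = σ`. -/
theorem sum_prod_phi_mul_comp_hist (ℓ : ℕ) (G : (Fin k → Fin (ℓ - 1) → Bool) → ℝ) :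
    ∑ I : Fin k → Fin n, (∏ r, phi y ℓ (σ r) (hist y (ℓ - 1) (I r))) * G (hist y (ℓ - 1) ∘ I)
      = ∑ I : Fin k → Fin n,
          (∏ r, if y ℓ (I r) = σ r then (1 : ℝ) else 0) * G (hist y (ℓ - 1) ∘ I) := by
  refine Finset.sum_prod_mul_comp_eq_of_sum_fiber_eq (hist y (ℓ - 1))
    (fun r i => phi y ℓ (σ r) (hist y (ℓ - 1) i)) (fun r i => if y ℓ i = σ r then 1 else 0)
    (fun r ξ => ?_) G
  rw [← sum_fiber_phi]
  exact Finset.sum_congr rfl fun i hi => by rw [(Finset.mem_filter.mp hi).2]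

def HitBy (j : ℕ) (I : Fin k → Fin n) : Prop :=
  ∃ ℓ' ≤ j, ∀ r, y ℓ' (I r) = σ r

open Classical in
noncomputable def hitCount (j : ℕ) : ℝ :=
  ∑ I : Fin k → Fin n, if HitBy y σ j I then 1 else 0

variable {y}

theorem hitBy_iff_hist (hy0 : ∀ i, y 0 i = true) (j : ℕ) (I : Fin k → Fin n) :
    HitBy y σ j I ↔ (∀ r, σ r = true) ∨ ∃ t : Fin j, ∀ r, hist y j (I r) t = σ r := by
  constructor
  · rintro ⟨_ | t, hle, h⟩
    · exact Or.inl fun r => by rw [← h r, hy0]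
    · exact Or.inr ⟨⟨t, by omega⟩, h⟩
  · rintro (h | ⟨t, h⟩)
    · exact ⟨0, Nat.zero_le _, fun r => (hy0 _).trans (h r).symm⟩
    · exact ⟨t + 1, t.isLt, h⟩

theorem hitBy_mono {i j : ℕ} (hij : i ≤ j) {I : Fin k → Fin n} (h : HitBy y σ i I) :
    HitBy y σ j I :=
  let ⟨ℓ', hle, h'⟩ := h
  ⟨ℓ', hle.trans hij, h'⟩

theorem hitCount_nonneg (j : ℕ) : 0 ≤ hitCount y σ j :=
  Finset.sum_nonneg fun _ _ => by split_ifs <;> norm_num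

theorem hitCount_mono {i j : ℕ} (hij : i ≤ j) : hitCount y σ i ≤ hitCount y σ j :=
  Finset.sum_le_sum fun _ _ => by
    split_ifs with hi hj
    exacts [le_rfl, absurd (hitBy_mono σ hij hi) hj, zero_le_one, le_rfl]

theorem pP_eq_hitCount_div (j : ℕ) :
    pP k y j σ = hitCount y σ j / Fintype.card (Fin k → Fin n) := by
  unfold pP hitCount HitBy
  congr!

theorem prod_phi_nonneg (ℓ : ℕ) (I : Fin k → Fin n) :
    0 ≤ ∏ r, phi y ℓ (σ r) (hist y (ℓ - 1) (I r)) :=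
  Finset.prod_nonneg fun _ _ => by unfold phi; positivity

theorem Qfun_nonneg (ℓ : ℕ) (I : Fin k → Fin n) : 0 ≤ Qfun y ℓ σ I := by
  unfold Qfun
  split_ifs
  exacts [prod_phi_nonneg σ ℓ I, le_rfl]

theorem Qfun_le_prod_phi (ℓ : ℕ) (I : Fin k → Fin n) :
    Qfun y ℓ σ I ≤ ∏ r, phi y ℓ (σ r) (hist y (ℓ - 1) (I r)) := by
  unfold Qfun
  split_ifs
  exacts [le_rfl, prod_phi_nonneg σ ℓ I]

theorem Qfun_le_threshold (ℓ : ℕ) (I : Fin k → Fin n) :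
    Qfun y ℓ σ I ≤ 1 / ((k : ℝ) * Real.log k) := by
  unfold Qfun
  split_ifs with h
  · exact h
  · have := Real.log_natCast_nonneg k
    positivity

theorem sum_Qfun_le (hy0 : ∀ i, y 0 i = true) (ℓ : ℕ) :
    ∑ I, Qfun y ℓ σ I ≤ (hitCount y σ ℓ - hitCount y σ (ℓ - 1))
      + 1 / ((k : ℝ) * Real.log k) * hitCount y σ (ℓ - 1) := by
  classical
  set c : ℝ := 1 / ((k : ℝ) * Real.log k)
  let notHit : (Fin k → Fin (ℓ - 1) → Bool) → ℝ := fun ξ =>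
    if (∀ r, σ r = true) ∨ ∃ t, ∀ r, ξ r t = σ r then 0 else 1
  have hnotHit : ∀ I, notHit (hist y (ℓ - 1) ∘ I) = if HitBy y σ (ℓ - 1) I then 0 else 1 :=
    fun I => by simp only [notHit, hitBy_iff_hist σ hy0, Function.comp_apply]
  have hfirst := sum_prod_phi_mul_comp_hist y σ ℓ notHit
  simp only [hnotHit] at hfirst
  calc ∑ I, Qfun y ℓ σ I
      ≤ ∑ I, ((if HitBy y σ (ℓ - 1) I then c else 0)
          + (∏ r, phi y ℓ (σ r) (hist y (ℓ - 1) (I r)))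
            * (if HitBy y σ (ℓ - 1) I then 0 else 1)) := by
        refine Finset.sum_le_sum fun I _ => ?_
        split_ifs
        · simp only [mul_zero, add_zero]
          exact Qfun_le_threshold σ ℓ I
        · simp only [mul_one, zero_add]
          exact Qfun_le_prod_phi σ ℓ I
    _ = c * hitCount y σ (ℓ - 1) + ∑ I, (∏ r, if y ℓ (I r) = σ r then (1 : ℝ) else 0)
          * (if HitBy y σ (ℓ - 1) I then 0 else 1) := by
        rw [Finset.sum_add_distrib, hfirst, hitCount, Finset.mul_sum]
        simp only [mul_ite, mul_one, mul_zero]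
    _ ≤ c * hitCount y σ (ℓ - 1) + (hitCount y σ ℓ - hitCount y σ (ℓ - 1)) := by
        rw [hitCount, hitCount, ← Finset.sum_sub_distrib]
        gcongr with I
        by_cases hprev : HitBy y σ (ℓ - 1) I
        · simp [hprev, hitBy_mono σ (Nat.sub_le ℓ 1) hprev]
        · by_cases hnow : ∀ r, y ℓ (I r) = σ r
          · simp [hprev, hnow, show HitBy y σ ℓ I from ⟨ℓ, le_rfl, hnow⟩]
          · simp only [hprev, Fintype.prod_boole, hnow, if_false, zero_mul, sub_zero]
            split_ifs <;> norm_num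
    _ = _ := add_comm _ _

theorem sum_sum_Qfun_le (hy0 : ∀ i, y 0 i = true) :
    ∑ ℓ ∈ Finset.Icc 1 k, ∑ I, Qfun y ℓ σ I ≤ (1 + 1 / Real.log k) * hitCount y σ k := by
  have hthreshold : (k : ℝ) * (1 / ((k : ℝ) * Real.log k)) = 1 / Real.log k := by
    rcases Nat.eq_zero_or_pos k with rfl | hk
    · simp
    · field_simp
  calc ∑ ℓ ∈ Finset.Icc 1 k, ∑ I, Qfun y ℓ σ I
      ≤ ∑ ℓ ∈ Finset.Icc 1 k, ((hitCount y σ ℓ - hitCount y σ (ℓ - 1))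
          + 1 / ((k : ℝ) * Real.log k) * hitCount y σ k) := by
        refine Finset.sum_le_sum fun ℓ hℓ => (sum_Qfun_le σ hy0 ℓ).trans ?_
        have := Real.log_natCast_nonneg k
        gcongr
        exact hitCount_mono σ (by have := (Finset.mem_Icc.mp hℓ).2; omega)
    _ = hitCount y σ k - hitCount y σ 0 + 1 / Real.log k * hitCount y σ k := by
        rw [Finset.sum_add_distrib, Finset.sum_Icc_one_sub_pred, Finset.sum_const, Nat.card_Icc,
          Nat.add_sub_cancel, nsmul_eq_mul, ← mul_assoc, hthreshold]
    _ ≤ (1 + 1 / Real.log k) * hitCount y σ k := by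
        linarith [hitCount_nonneg σ 0 (y := y)]

end Energy

theorem one_sub_mul_le_of_le_one_add_mul {u s t : ℝ} (hu : 0 ≤ u) (hs : 0 ≤ s)
    (h : s ≤ (1 + u) * t) : (1 - u) * s ≤ t := by
  rcases le_total u 1 with hu1 | hu1
  · nlinarith [mul_nonneg (sub_nonneg.2 hu1) (sub_nonneg.2 h), mul_nonneg hu hu]
  · nlinarith [mul_nonneg (sub_nonneg.2 hu1) hs]

theorem statement13_general (k n : ℕ)
    (y : ℕ → Fin n → Bool) (hy0 : ∀ i, y 0 i = true) (σ : Fin k → Bool) :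
    (1 - 1 / Real.log k) * ∑ ℓ ∈ Finset.Icc 1 k, qfun y ℓ σ ≤ pP k y k σ := by
  have hQ : 0 ≤ ∑ ℓ ∈ Finset.Icc 1 k, ∑ I, Qfun y ℓ σ I :=
    Finset.sum_nonneg fun ℓ _ => Finset.sum_nonneg fun I _ => Qfun_nonneg σ ℓ I
  have hlog : 0 ≤ 1 / Real.log k := by
    have := Real.log_natCast_nonneg k
    positivity
  simp only [qfun, ← Finset.sum_div]
  rw [pP_eq_hitCount_div, ← mul_div_assoc]
  exact div_le_div_of_nonneg_right
    (one_sub_mul_le_of_le_one_add_mul hlog hQ (sum_sum_Qfun_le σ hy0)) (Nat.cast_nonneg _)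

theorem statement13 (k n : ℕ) (hk : 2 ≤ k) (hn : 1 ≤ n)
    (y : ℕ → Fin n → Bool) (hy0 : ∀ i, y 0 i = true) (σ : Fin k → Bool) :
    (1 - 1 / Real.log k) * ∑ ℓ ∈ Finset.Icc 1 k, qfun y ℓ σ ≤ pP k y k σ :=
  statement13_general k n y hy0 σ
end

section
/- Fix κ > κ* and let β_−, β_+ be as defined from κ. For every ε > 0 there exists k* such that for every integer k ≥ k*, every n ≥ 1, every tuple of assignments y^0,…,y^k ∈ {T,F}^n with y^0 the all-T assignment, and every 1 ≤ ℓ ≤ k: if H(π(y^ℓ | y^0,…,y^{ℓ−1})) = β·log k / k for some β ∈ [β_−, β_+], then Σ_{σ∈{T,F}^k} q_ℓ(σ) ≥ 1 − β·e^{−(β−1)} − ε. -/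
open MeasureTheory Finset Filter ProbabilityTheory

universe u

/-!
Write `F(i, b) = φ_ℓ(b | y^{≤ℓ-1}_i)`. Because `y^0` is all-`T`, the conditional overlap entropy
is the average of `H_b(F(i, T))`, so it equals `β log k / k` by hypothesis. The products
`∏ r F(I_r, σ_r)` have total mass `n^k` over all `(σ, I)`, and truncation at `δ = 1/(k log k)`
loses at most `δ^{-θ} (∑_z F(z)^{1+θ})^k` (Markov with exponent `θ = log β / log k`), where
`δ^{-θ} = β k^{o(1)}`. Comparing `x^{1+θ}` with `x - (1 - o(1)) (1 - 1/β) x log(1/x) / log k`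
pointwise turns the entropy hypothesis into `∑_z F(z)^{1+θ} ≤ n (1 - (β - 1 - o(1)) / k)`,
whose `k`-th power is at most `n^k e^{-(β-1) + o(1)}`.
-/

open Real

theorem mul_one_sub_exp_neg_le {x Y : ℝ} (hx : 0 ≤ x) (hxY : x ≤ Y) (hY : 0 < Y) :
    x * (1 - exp (-Y)) ≤ Y * (1 - exp (-x)) := by
  have hconv := convexOn_exp.2 (Set.mem_univ (-Y)) (Set.mem_univ 0)
    (div_nonneg hx hY.le) (sub_nonneg.2 ((div_le_one hY).2 hxY)) (by ring)
  have hx' : x / Y * -Y = -x := by field_simp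
  simp only [smul_eq_mul, mul_zero, add_zero, exp_zero, mul_one, hx'] at hconv
  have := mul_le_mul_of_nonneg_left hconv hY.le
  field_simp at this
  nlinarith

theorem mul_exp_neg_le_mul_exp_neg {V v : ℝ} (hV : 1 ≤ V) (hVv : V ≤ v) :
    v * exp (-v) ≤ V * exp (-V) := by
  have hV0 : 0 < V := by linarith
  have hratio : v / V ≤ exp (v - V) := by
    rw [div_le_iff₀ hV0]
    nlinarith [add_one_le_exp (v - V), exp_pos (v - V)]
  calc v * exp (-v) = v / V * exp (-v) * V := by field_simp
    _ ≤ exp (v - V) * exp (-v) * V := by gcongr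
    _ = V * exp (-V) := by rw [← exp_add]; ring_nf

theorem mul_exp_neg_sub_one_le_one (β : ℝ) : β * exp (-(β - 1)) ≤ 1 := by
  have h := mul_le_mul_of_nonneg_right (add_one_le_exp (β - 1)) (exp_pos (-(β - 1))).le
  rwa [← exp_add, add_neg_cancel, exp_zero, sub_add_cancel] at h

/-- Split at `-log x = (1 + η) L`: below it, compare the concave `1 - exp (-·)` with its chord;
above it, `x log (1/x) ≤ (1 + η) L exp (-(1 + η) L)` is absorbed by the error term. -/
theorem rpow_one_add_div_le {L τ η x : ℝ} (hL : 1 ≤ L) (hτ : 0 < τ) (hη : 0 ≤ η)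
    (hx0 : 0 ≤ x) (hx1 : x ≤ 1) :
    x ^ (1 + τ / L) ≤ x - (1 - η) * (1 - exp (-τ)) / L * negMulLog x
      + (1 + η) * exp (-((1 + η) * L)) := by
  have hL0 : 0 < L := by linarith
  have herr : 0 ≤ (1 + η) * exp (-((1 + η) * L)) := by positivity
  have hexpτ : 0 ≤ 1 - exp (-τ) := by simp [hτ.le]
  rcases hx0.eq_or_lt with rfl | hx0
  · rw [zero_rpow (by positivity), negMulLog_zero]
    linarith
  set u := -log x with hu
  have hu0 : 0 ≤ u := neg_nonneg.2 (log_nonpos hx0.le hx1)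
  have hxu : exp (-u) = x := by rw [hu, neg_neg, exp_log hx0]
  have hneg : negMulLog x = x * u := by rw [negMulLog, hu]; ring
  have hrpow : x ^ (1 + τ / L) = x * exp (-(τ / L * u)) := by
    rw [rpow_def_of_pos hx0, ← neg_neg (log x), ← hu, ← hxu, ← exp_add]; ring_nf
  rw [hrpow, hneg]
  rcases le_or_gt u ((1 + η) * L) with hsmall | hlarge
  · suffices h : (1 - η) * (1 - exp (-τ)) / L * u ≤ 1 - exp (-(τ / L * u)) by nlinarith
    have hY : 0 < (1 + η) * τ := by positivity
    have hθu : τ / L * u ≤ (1 + η) * τ := by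
      rw [div_mul_eq_mul_div, div_le_iff₀ hL0]; nlinarith
    have hchord := mul_one_sub_exp_neg_le (by positivity) hθu hY
    have hmono : exp (-((1 + η) * τ)) ≤ exp (-τ) := exp_le_exp.2 (by nlinarith)
    have hcoef : (1 - η) * (1 - exp (-τ)) / L * u * ((1 + η) * τ)
        ≤ τ / L * u * (1 - exp (-((1 + η) * τ))) := by
      rw [show (1 - η) * (1 - exp (-τ)) / L * u * ((1 + η) * τ)
          = τ / L * u * ((1 - η ^ 2) * (1 - exp (-τ))) by ring]
      gcongr
      nlinarith
    nlinarith
  · have hc : (1 - η) * (1 - exp (-τ)) / L ≤ 1 / L := by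
      gcongr; nlinarith [exp_pos (-τ)]
    have hV : 1 ≤ (1 + η) * L := by nlinarith
    have htail := mul_exp_neg_le_mul_exp_neg hV hlarge.le
    have hexp_le : exp (-(τ / L * u)) ≤ 1 := exp_le_one_iff.2 (neg_nonpos.2 (by positivity))
    have hentropy :
        (1 - η) * (1 - exp (-τ)) / L * (x * u) ≤ (1 + η) * exp (-((1 + η) * L)) :=
      calc (1 - η) * (1 - exp (-τ)) / L * (x * u) ≤ 1 / L * (u * exp (-u)) := by
            rw [hxu, mul_comm x u]; gcongr
        _ ≤ 1 / L * ((1 + η) * L * exp (-((1 + η) * L))) := by gcongr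
        _ = (1 + η) * exp (-((1 + η) * L)) := by field_simp
    nlinarith

noncomputable def truncAt (δ w : ℝ) : ℝ := if w ≤ δ then w else 0

/-- Markov's inequality in pointwise form: above the threshold, `w ≤ (w / δ) ^ θ * w`. -/
theorem sub_inv_rpow_mul_rpow_le_truncAt {δ θ w : ℝ} (hδ : 0 < δ) (hθ : 0 ≤ θ)
    (hw : 0 ≤ w) : w - (δ ^ θ)⁻¹ * w ^ (1 + θ) ≤ truncAt δ w := by
  unfold truncAt
  split_ifs with hwδ
  · have : 0 ≤ (δ ^ θ)⁻¹ * w ^ (1 + θ) := by positivity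
    linarith
  · have hw0 : 0 < w := hδ.trans (not_le.1 hwδ)
    have hδθ : δ ^ θ ≤ w ^ θ := rpow_le_rpow hδ.le (not_le.1 hwδ).le hθ
    rw [rpow_add hw0, rpow_one, sub_nonpos, ← mul_assoc, inv_mul_eq_div, div_mul_eq_mul_div,
      le_div_iff₀ (by positivity)]
    exact mul_le_mul_of_nonneg_left hδθ hw

theorem sum_sum_prod_eq_pow {ι α : Type*} [Fintype ι] [Fintype α] (k : ℕ)
    (g : ι × α → ℝ) : ∑ σ : Fin k → α, ∑ I : Fin k → ι, ∏ r, g (I r, σ r) = (∑ z, g z) ^ k := by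
  rw [Fintype.sum_pow,
    ← (Equiv.arrowProdEquivProdArrow (Fin k) (fun _ => ι) (fun _ => α)).symm.sum_comp,
    Fintype.sum_prod_type, Finset.sum_comm]
  rfl

theorem sum_sum_truncAt_ge {ι : Type*} [Fintype ι] (k : ℕ) (F : ι × Bool → ℝ)
    (hF0 : ∀ z, 0 ≤ F z) (hF1 : ∀ i, F (i, true) + F (i, false) = 1) {δ θ : ℝ}
    (hδ : 0 < δ) (hθ : 0 ≤ θ) :
    (Fintype.card ι : ℝ) ^ k - (δ ^ θ)⁻¹ * (∑ z, F z ^ (1 + θ)) ^ k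
      ≤ ∑ σ : Fin k → Bool, ∑ I : Fin k → ι, truncAt δ (∏ r, F (I r, σ r)) := by
  have hmass : ∑ z, F z = Fintype.card ι := by simp [Fintype.sum_prod_type, hF1]
  calc (Fintype.card ι : ℝ) ^ k - (δ ^ θ)⁻¹ * (∑ z, F z ^ (1 + θ)) ^ k
      = ∑ σ : Fin k → Bool, ∑ I : Fin k → ι,
          (∏ r, F (I r, σ r) - (δ ^ θ)⁻¹ * (∏ r, F (I r, σ r)) ^ (1 + θ)) := by
        simp only [Finset.sum_sub_distrib, ← Finset.mul_sum, sum_sum_prod_eq_pow, hmass,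
          ← finsetProd_rpow _ _ (fun r _ => hF0 _)]
        rw [sum_sum_prod_eq_pow k (fun z => F z ^ (1 + θ))]
    _ ≤ _ := by
        gcongr with σ _ I _
        exact sub_inv_rpow_mul_rpow_le_truncAt hδ hθ (Finset.prod_nonneg fun r _ => hF0 _)

theorem sum_rpow_le_of_sum_Hb {ι : Type*} [Fintype ι] (F : ι × Bool → ℝ)
    (hF0 : ∀ z, 0 ≤ F z) (hF1 : ∀ i, F (i, true) + F (i, false) = 1) {L τ η : ℝ}
    (hL : 1 ≤ L) (hτ : 0 < τ) (hη : 0 ≤ η) :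
    ∑ z, F z ^ (1 + τ / L) ≤ Fintype.card ι * (1 + 2 * ((1 + η) * exp (-((1 + η) * L))))
      - (1 - η) * (1 - exp (-τ)) / L * ∑ i, Hb (F (i, true)) := by
  set c := (1 - η) * (1 - exp (-τ)) / L
  set s := (1 + η) * exp (-((1 + η) * L))
  have hF_le : ∀ i b, F (i, b) ≤ 1 := fun i b => by
    have := hF1 i; have := hF0 (i, true); have := hF0 (i, false); cases b <;> linarith
  have hpoint : ∀ i b, F (i, b) ^ (1 + τ / L) ≤ F (i, b) - c * negMulLog (F (i, b)) + s :=
    fun i b => rpow_one_add_div_le hL hτ hη (hF0 _) (hF_le i b)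
  have hHb : ∀ i, Hb (F (i, true)) = negMulLog (F (i, true)) + negMulLog (F (i, false)) := by
    intro i; rw [Hb, ← hF1 i, add_sub_cancel_left]
  calc ∑ z, F z ^ (1 + τ / L)
      = ∑ i, (F (i, true) ^ (1 + τ / L) + F (i, false) ^ (1 + τ / L)) := by
        simp only [Fintype.sum_prod_type, Fintype.sum_bool]
    _ ≤ ∑ i, (1 + 2 * s - c * Hb (F (i, true))) := by
        gcongr with i
        rw [hHb, mul_add]
        linarith [hpoint i true, hpoint i false, hF1 i]
    _ = _ := by
        simp only [Finset.sum_sub_distrib, Finset.sum_const, Finset.card_univ, nsmul_eq_mul,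
          Finset.mul_sum]

theorem natCard_subtype_eq_card_filter {α : Type*} [Fintype α] (p : α → Prop)
    [DecidablePred p] : Nat.card {a // p a} = #(univ.filter p) := by
  rw [Nat.card_eq_fintype_card, Fintype.card_subtype]

theorem phi_true_add_phi_false {n : ℕ} (y : ℕ → Fin n → Bool) (ℓ : ℕ) (i : Fin n) :
    phi y ℓ true (hist y (ℓ - 1) i) + phi y ℓ false (hist y (ℓ - 1) i) = 1 := by
  classical
  have hpos : (0 : ℝ) < #(univ.filter fun j => hist y (ℓ - 1) j = hist y (ℓ - 1) i) :=
    Nat.cast_pos.2 (Finset.card_pos.2 ⟨i, by simp⟩)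
  simp only [phi, natCard_subtype_eq_card_filter, ← add_div, div_eq_one_iff_eq hpos.ne']
  rw [← Nat.cast_add, ← Finset.card_filter_add_card_filter_not
    (s := univ.filter fun j => hist y (ℓ - 1) j = hist y (ℓ - 1) i) (fun j => y ℓ j = true)]
  simp [Finset.filter_filter, and_comm]

theorem lamFrac_not {n ℓ : ℕ} (x : Fin n → Bool) (Y : Fin ℓ → Fin n → Bool)
    (σ : Fin ℓ → Bool) : lamFrac x Y (fun t => !σ t) = lamFrac x Y σ := by
  simp only [lamFrac, Bool.not_not, or_comm, add_comm]

theorem sum_patCount_mul {n ℓ : ℕ} (Y : Fin ℓ → Fin n → Bool) (g : (Fin ℓ → Bool) → ℝ) :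
    ∑ σ, (patCount Y σ : ℝ) * g σ = ∑ i, g (fun t => Y t i) := by
  classical
  rw [← Finset.sum_fiberwise univ (fun i => fun t => Y t i)]
  refine Finset.sum_congr rfl fun σ _ => ?_
  rw [Finset.sum_congr rfl fun i hi => by rw [(Finset.mem_filter.1 hi).2], Finset.sum_const,
    nsmul_eq_mul, patCount, natCard_subtype_eq_card_filter]
  simp only [funext_iff]

theorem condOverlapEntropy_eq_sum {n ℓ : ℕ} (x : Fin n → Bool) (Y : Fin ℓ → Fin n → Bool) :
    condOverlapEntropy x Y = (∑ i, Hb (lamFrac x Y (fun t => Y t i))) / n := by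
  set h : (Fin ℓ → Bool) → ℝ := fun σ => Hb (lamFrac x Y σ)
  have hflip :
      ∑ σ, (patCount Y (fun t => !σ t) : ℝ) * h σ = ∑ σ, (patCount Y σ : ℝ) * h σ := by
    rw [← (Equiv.piCongrRight fun _ : Fin ℓ => Equiv.boolNot).sum_comp]
    refine Finset.sum_congr rfl fun σ _ => ?_
    change (patCount Y (fun t => !!σ t) : ℝ) * h (fun t => !σ t) = _
    simp only [Bool.not_not, h, lamFrac_not]
  simp only [condOverlapEntropy, profFrac, div_mul_eq_mul_div, ← Finset.sum_div, add_mul,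
    Finset.sum_add_distrib]
  rw [hflip, sum_patCount_mul]
  ring

section History

variable {n : ℕ} {y : ℕ → Fin n → Bool}

theorem pattern_eq_iff_hist_eq (hy0 : ∀ i, y 0 i = true) (l : ℕ) (i j : Fin n) :
    (∀ t : Fin (l + 1), y t j = y t i) ↔ hist y l j = hist y l i := by
  refine ⟨fun h => funext fun s => h s.succ, fun h t => ?_⟩
  induction t using Fin.cases with
  | zero => simp [hy0]
  | succ s => exact congrFun h s

theorem lamFrac_pattern_eq_phi (hy0 : ∀ i, y 0 i = true) (l : ℕ) (i : Fin n) :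
    lamFrac (y (l + 1)) (fun t : Fin (l + 1) => y t) (fun t => y t i)
      = phi y (l + 1) true (hist y l i) := by
  have hnot : ∀ j, ¬ ∀ t : Fin (l + 1), y t j = !y t i := fun j h => by simpa [hy0] using h 0
  have hnum : Nat.card {j // ((∀ t : Fin (l + 1), y t j = y t i) ∨ (∀ t : Fin (l + 1),
      y t j = !y t i)) ∧ y (l + 1) j = true}
      = Nat.card {j // y (l + 1) j = true ∧ hist y l j = hist y l i} :=
    Nat.card_congr <| Equiv.subtypeEquivRight fun j => by
      rw [or_iff_left (hnot j), pattern_eq_iff_hist_eq hy0, and_comm]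
  have hden : patCount (fun t : Fin (l + 1) => y t) (fun t => y t i)
      = Nat.card {j // hist y l j = hist y l i} :=
    Nat.card_congr <| Equiv.subtypeEquivRight fun j => pattern_eq_iff_hist_eq hy0 l i j
  have hempty : patCount (fun t : Fin (l + 1) => y t) (fun t => !y t i) = 0 :=
    Nat.card_eq_zero.2 (Or.inl ⟨fun j => hnot j.1 j.2⟩)
  rw [lamFrac, hnum, hden, hempty, Nat.cast_zero, add_zero]
  rfl

theorem condH_succ_eq (hy0 : ∀ i, y 0 i = true) (l : ℕ) :
    condH y (l + 1) = (∑ i, Hb (phi y (l + 1) true (hist y l i))) / n := by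
  simp only [condH, condOverlapEntropy_eq_sum, lamFrac_pattern_eq_phi hy0]

-- `Qfun y (l + 1)` unfolds to `truncAt` of the product, as `l + 1 - 1` reduces to `l`.
theorem sum_qfun_eq {k : ℕ} (y : ℕ → Fin n → Bool) (l : ℕ) :
    ∑ σ : Fin k → Bool, qfun y (l + 1) σ = (∑ σ : Fin k → Bool, ∑ I : Fin k → Fin n,
      truncAt (1 / (k * log k)) (∏ r, phi y (l + 1) (σ r) (hist y l (I r)))) / (n : ℝ) ^ k := by
  simp only [qfun, ← Finset.sum_div, Fintype.card_fun, Fintype.card_fin, Nat.cast_pow]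
  rfl

end History

theorem inv_rpow_log_div_log_eq {k β : ℝ} (hk : 0 < k) (hL : 0 < log k) (hβ : 0 < β) :
    ((1 / (k * log k)) ^ (log β / log k))⁻¹ = β * exp (log β * log (log k) / log k) := by
  rw [one_div, inv_rpow (by positivity), inv_inv, rpow_def_of_pos (by positivity),
    log_mul hk.ne' hL.ne', ← exp_log hβ, ← exp_add, exp_log hβ]
  congr 1
  field_simp

theorem pow_mul_one_sub_le_sum_sum_truncAt {ι : Type*} [Fintype ι] {k : ℕ}
    (F : ι × Bool → ℝ) (hF0 : ∀ z, 0 ≤ F z) (hF1 : ∀ i, F (i, true) + F (i, false) = 1)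
    {β η : ℝ} (hβ : 1 < β) (hη : 0 ≤ η) (hL : 1 ≤ log k) (hβk : β ≤ k)
    (hslack : 2 * (1 + η) * exp (-(η * log k)) ≤ η)
    (hlogL : log β * log (log k) / log k ≤ η)
    (hHb : ∑ i, Hb (F (i, true)) = Fintype.card ι * (β * log k / k)) :
    (Fintype.card ι : ℝ) ^ k * (1 - β * exp (-(β - 1)) * exp (η * (β + 1)))
      ≤ ∑ σ : Fin k → Bool, ∑ I : Fin k → ι,
          truncAt (1 / (k * log k)) (∏ r, F (I r, σ r)) := by
  set N : ℝ := (Fintype.card ι : ℝ)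
  set L := log (k : ℝ)
  have hL0 : 0 < L := by linarith
  have hk0 : (0 : ℝ) < k := by linarith
  set D := (1 - η) * (β - 1) - 2 * (1 + η) * exp (-(η * L))
  have hrpow : ∑ z, F z ^ (1 + log β / L) ≤ N * (1 - D / k) := by
    refine (sum_rpow_le_of_sum_Hb F hF0 hF1 hL (log_pos hβ) hη).trans_eq ?_
    rw [hHb, exp_neg (log β), exp_log (by linarith), show -((1 + η) * L) = -(η * L) + -L by ring,
      exp_add, exp_neg L, exp_log hk0]
    field_simp
    ring
  have hD : D ≤ k := by
    have : 0 ≤ 2 * (1 + η) * exp (-(η * L)) := by positivity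
    nlinarith
  have hsum0 : 0 ≤ ∑ z, F z ^ (1 + log β / L) :=
    Finset.sum_nonneg fun z _ => rpow_nonneg (hF0 z) _
  have hpow : (∑ z, F z ^ (1 + log β / L)) ^ k ≤ N ^ k * exp (-D) :=
    calc _ ≤ (N * (1 - D / k)) ^ k := pow_le_pow_left₀ hsum0 hrpow k
      _ = N ^ k * (1 - D / k) ^ k := mul_pow ..
      _ ≤ N ^ k * exp (-D) := by gcongr; exact one_sub_div_pow_le_exp_neg hD
  have hfactor : ((1 / (k * L)) ^ (log β / L))⁻¹ ≤ β * exp η := by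
    rw [inv_rpow_log_div_log_eq hk0 hL0 (by linarith)]
    gcongr
  have hexp : exp η * exp (-D) ≤ exp (-(β - 1)) * exp (η * (β + 1)) := by
    rw [← exp_add, ← exp_add, exp_le_exp]
    nlinarith
  calc N ^ k * (1 - β * exp (-(β - 1)) * exp (η * (β + 1)))
      ≤ N ^ k - β * exp η * (N ^ k * exp (-D)) := by
        nlinarith [mul_le_mul_of_nonneg_left hexp (by positivity : 0 ≤ β * N ^ k)]
    _ ≤ N ^ k - ((1 / (k * L)) ^ (log β / L))⁻¹ * (∑ z, F z ^ (1 + log β / L)) ^ k :=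
        sub_le_sub_left (mul_le_mul hfactor hpow (pow_nonneg hsum0 k) (by positivity)) _
    _ ≤ _ := sum_sum_truncAt_ge k F hF0 hF1 (by positivity)
        (div_nonneg (log_nonneg hβ.le) hL0.le)
theorem tendsto_log_natCast_atTop : Tendsto (fun k : ℕ => log k) atTop atTop :=
  tendsto_log_atTop.comp tendsto_natCast_atTop_atTop

theorem eventually_mul_exp_neg_mul_log_le {η : ℝ} (hη : 0 < η) (C : ℝ) :
    ∀ᶠ k : ℕ in atTop, C * exp (-(η * log k)) ≤ η := by
  have h : Tendsto (fun k : ℕ => C * exp (-(η * log k))) atTop (nhds 0) := by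
    simpa using (tendsto_exp_neg_atTop_nhds_zero.comp
      (tendsto_log_natCast_atTop.const_mul_atTop hη)).const_mul C
  exact h.eventually (ge_mem_nhds hη)

theorem eventually_log_mul_log_log_div_log_le (B : ℝ) {η : ℝ} (hη : 0 < η) :
    ∀ᶠ k : ℕ in atTop, ∀ β ∈ Set.Ioc 1 B, log β * log (log k) / log k ≤ η := by
  have hratio : Tendsto (fun k : ℕ => log B * (log (log k) / log k)) atTop (nhds 0) := by
    simpa [Function.comp_def] using ((tendsto_pow_log_div_mul_add_atTop 1 0 1 one_ne_zero).comp
      tendsto_log_natCast_atTop).const_mul (log B)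
  filter_upwards [hratio.eventually (ge_mem_nhds hη),
    tendsto_log_natCast_atTop.eventually_ge_atTop 1] with k hk hL β hβ
  rw [mul_div_assoc]
  refine le_trans ?_ hk
  gcongr
  · exact div_nonneg (log_nonneg hL) (by linarith)
  · linarith [hβ.1]
  · exact hβ.2

theorem eventually_one_sub_mul_exp_le_sum_qfun (B : ℝ) {ε : ℝ} (hε : 0 < ε) :
    ∀ᶠ k : ℕ in atTop,
      ∀ n : ℕ, 1 ≤ n → ∀ y : ℕ → Fin n → Bool, (∀ i, y 0 i = true) →
        ∀ ℓ : ℕ, 1 ≤ ℓ → ∀ β ∈ Set.Ioc 1 B, condH y ℓ = β * log k / k →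
          1 - β * exp (-(β - 1)) - ε ≤ ∑ σ : Fin k → Bool, qfun y ℓ σ := by
  rcases le_or_gt B 1 with hB | hB
  · exact Eventually.of_forall fun k n _ y _ ℓ _ β hβ =>
      absurd (hβ.1.trans_le hβ.2) hB.not_gt
  set η := log (1 + ε) / (B + 1)
  have hη : 0 < η := div_pos (log_pos (by linarith)) (by linarith)
  filter_upwards [tendsto_log_natCast_atTop.eventually_ge_atTop 1,
    tendsto_natCast_atTop_atTop.eventually_ge_atTop B,
    eventually_mul_exp_neg_mul_log_le hη (2 * (1 + η)),
    eventually_log_mul_log_log_div_log_le B hη] with k hL hBk hslack hlogL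
  intro n hn y hy0 ℓ hℓ β hβ hcond
  obtain ⟨l, rfl⟩ : ∃ l, ℓ = l + 1 := ⟨ℓ - 1, by omega⟩
  have hHb : ∑ i, Hb (phi y (l + 1) true (hist y l i))
      = Fintype.card (Fin n) * (β * log k / k) := by
    rw [condH_succ_eq hy0, div_eq_iff (by positivity)] at hcond
    rw [Fintype.card_fin, hcond, mul_comm]
  have hmain := pow_mul_one_sub_le_sum_sum_truncAt (fun z => phi y (l + 1) z.2 (hist y l z.1))
    (fun _ => div_nonneg (Nat.cast_nonneg _) (Nat.cast_nonneg _))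
    (phi_true_add_phi_false y (l + 1)) hβ.1 hη.le hL (hβ.2.trans hBk) hslack (hlogL β hβ) hHb
  rw [Fintype.card_fin] at hmain
  have hloss : β * exp (-(β - 1)) * exp (η * (β + 1)) ≤ β * exp (-(β - 1)) + ε := by
    have h1 : exp (η * (β + 1)) ≤ 1 + ε := by
      calc exp (η * (β + 1)) ≤ exp (η * (B + 1)) := by gcongr; exact hβ.2
        _ = 1 + ε := by rw [div_mul_cancel₀ _ (by linarith), exp_log (by linarith)]
    have h2 : 0 ≤ β * exp (-(β - 1)) := mul_nonneg (by linarith [hβ.1]) (exp_pos _).le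
    nlinarith [mul_exp_neg_sub_one_le_one β]
  have hnk : (0 : ℝ) < (n : ℝ) ^ k := by positivity
  rw [sum_qfun_eq, le_div_iff₀ hnk]
  nlinarith [mul_le_mul_of_nonneg_left hloss hnk.le]

theorem statement14_general (βmin βstar βm βp : ℝ)
    (hstar1 : 1 < βstar)
    (hmin1 : 1 < βmin)
    (hβm : βm = (βmin + βstar) / 2) (ε : ℝ) (hε : 0 < ε) :
    ∃ kstar : ℕ, ∀ k : ℕ, kstar ≤ k →
      ∀ n : ℕ, 1 ≤ n →
        ∀ y : ℕ → Fin n → Bool, (∀ i, y 0 i = true) →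
          ∀ ℓ : ℕ, 1 ≤ ℓ → ℓ ≤ k →
            ∀ β : ℝ, β ∈ Set.Icc βm βp →
              condH y ℓ = β * Real.log k / k →
              1 - β * Real.exp (-(β - 1)) - ε ≤ ∑ σ : Fin k → Bool, qfun y ℓ σ := by
  obtain ⟨kstar, hkstar⟩ := eventually_atTop.1 (eventually_one_sub_mul_exp_le_sum_qfun βp hε)
  exact ⟨kstar, fun k hk n hn y hy0 ℓ hℓ _ β hβ =>
    hkstar k hk n hn y hy0 ℓ hℓ β ⟨by linarith [hβ.1], hβ.2⟩⟩

theorem statement14 (κ βmin βmax βstar βm βp : ℝ) (hκ : kappaStar < κ)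
    (hstar1 : 1 < βstar) (hstar2 : βstar ^ 2 * Real.exp (-(βstar - 1)) = 1)
    (hmin1 : 1 < βmin) (hmin2 : βmin < βstar) (hmin3 : iota βmin = κ)
    (hmax1 : βstar < βmax) (hmax2 : iota βmax = κ)
    (hβm : βm = (βmin + βstar) / 2) (hβp : βp = (βmax + βstar) / 2) (ε : ℝ) (hε : 0 < ε) :
    ∃ kstar : ℕ, ∀ k : ℕ, kstar ≤ k →
      ∀ n : ℕ, 1 ≤ n →
        ∀ y : ℕ → Fin n → Bool, (∀ i, y 0 i = true) →
          ∀ ℓ : ℕ, 1 ≤ ℓ → ℓ ≤ k →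
            ∀ β : ℝ, β ∈ Set.Icc βm βp →
              condH y ℓ = β * Real.log k / k →
              1 - β * Real.exp (-(β - 1)) - ε ≤ ∑ σ : Fin k → Bool, qfun y ℓ σ :=
  statement14_general βmin βstar βm βp hstar1 hmin1 hβm ε hε
end

section
/- Let (X,μ) be a probability space and let J, I, D be positive integers. Suppose g : X^J → ℝ can be written g = Σ_{i=1}^I g_i, where each g_i : X^J → ℝ is measurable, square-integrable with respect to the product measure μ^{⊗J}, and depends on at most D coordinates (i.e., there is a set S_i ⊆ [J] with |S_i| ≤ D such that g_i(x) = g_i(y) whenever x_j = y_j for all j ∈ S_i). Then D·Var_{μ^{⊗J}}(g) ≥ Σ_{j=1}^J ∫_{X^J} Var_j g dμ^{⊗J}, where for x ∈ X^J and j ∈ [J], E_j g(x) = ∫_X g(x^{j→z}) dμ(z) and Var_j g(x) = ∫_X (g(x^{j→z}) − E_j g(x))² dμ(z), with x^{j→z} denoting x with its j-th coordinate replaced by z. -/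
open MeasureTheory Finset Filter ProbabilityTheory

universe u

/-!
Write `P_W f` for the average of `f` over the coordinates outside `W` (the conditional
expectation given `x_W`) and `a(W) = ‖P_W f‖²`. The `P_W` are commuting projections with
`P_V P_W = P_{V ∩ W}`, so the Möbius transform `w(U) = ∑_{W ⊆ U} (-1)^{|U \ W|} a(W)` is the
squared norm of the Efron–Stein component `∑_{W ⊆ U} (-1)^{|U \ W|} P_W f`, hence
nonnegative, and `a(T) = ∑_{U ⊆ T} w(U)`. Therefore `Var f = ∑_{U ≠ ∅} w(U)` and
`∫ Var_j f = ∑_{U ∋ j} w(U)`, whose sum over `j` is `∑_U |U| w(U)`. If `f = ∑ g_i` where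
`g_i` depends only on a set `S_i` of at most `D` coordinates, then `⟨g_i, P_W f⟩` does not
change when a coordinate outside `S_i` is added to `W`, and this forces `w(U) = 0` for
`|U| > D`.
-/

namespace EfronStein

section Moebius

variable {κ R : Type*} [CommRing R]

def moebius (a : Finset κ → R) (U : Finset κ) : R :=
  ∑ W ∈ U.powerset, (-1) ^ (U.card + W.card) * a W

theorem moebius_sum {ι : Type*} (s : Finset ι) (a : ι → Finset κ → R) (U : Finset κ) :
    moebius (fun W => ∑ i ∈ s, a i W) U = ∑ i ∈ s, moebius (a i) U := by
  simp only [moebius, mul_sum]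
  exact sum_comm

variable [DecidableEq κ]

theorem moebius_eq_zero_of_insert_eq {a : Finset κ → R} {U : Finset κ} {j : κ} (hj : j ∈ U)
    (ha : ∀ W, j ∉ W → a (insert j W) = a W) : moebius a U = 0 := by
  rw [moebius, ← insert_erase hj, sum_powerset_insert (notMem_erase j U), ← sum_add_distrib]
  refine sum_eq_zero fun W hW => ?_
  have hjW : j ∉ W := fun h => notMem_erase j U (mem_powerset.1 hW h)
  rw [ha W hjW, card_insert_of_notMem hjW, card_insert_of_notMem (notMem_erase j U)]
  ring

theorem moebius_insert {a : Finset κ → R} {U : Finset κ} {j : κ} (hj : j ∉ U) :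
    moebius a (insert j U) = moebius (fun W => a (insert j W)) U - moebius a U := by
  rw [moebius, sum_powerset_insert hj, moebius, moebius, sub_eq_add_neg, add_comm,
    ← sum_neg_distrib]
  congr 1 <;> refine sum_congr rfl fun W hW => ?_
  · rw [card_insert_of_notMem hj, card_insert_of_notMem fun h => hj (mem_powerset.1 hW h)]
    ring
  · rw [card_insert_of_notMem hj]
    ring

theorem sum_powerset_moebius (a : Finset κ → R) (T : Finset κ) :
    ∑ U ∈ T.powerset, moebius a U = a T := by
  induction T using Finset.induction_on generalizing a with
  | empty => simp [moebius]
  | insert j T hj ih =>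
    rw [sum_powerset_insert hj,
      sum_congr rfl fun U hU => moebius_insert fun h => hj (mem_powerset.1 hU h),
      sum_sub_distrib, ih, ih]
    ring

theorem sum_powerset_sum_powerset_inter_eq_moebius (a : Finset κ → R) (U : Finset κ) :
    ∑ W ∈ U.powerset, ∑ V ∈ U.powerset,
      (-1) ^ (U.card + W.card) * (-1) ^ (U.card + V.card) * a (W ∩ V) = moebius a U := by
  simp_rw [mul_assoc, ← mul_sum]
  rw [sum_eq_single_of_mem U (mem_powerset_self U)]
  · rw [← two_mul, pow_mul, neg_one_sq, one_pow, one_mul, moebius]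
    exact sum_congr rfl fun V hV => by rw [inter_eq_right.2 (mem_powerset.1 hV)]
  · intro W hW hWU
    obtain ⟨j, hjU, hjW⟩ := exists_of_ssubset (ssubset_of_subset_of_ne (mem_powerset.1 hW) hWU)
    rw [← moebius, moebius_eq_zero_of_insert_eq hjU fun V _ => by
      rw [inter_insert_of_notMem hjW], mul_zero]

theorem sum_sub_compl_singleton_le {ι : Type*} [Fintype ι] [DecidableEq ι]
    {a : Finset ι → ℝ} {D : ℕ} (hpos : ∀ U, 0 ≤ moebius a U)
    (hvanish : ∀ U, D < U.card → moebius a U = 0) :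
    ∑ j, (a univ - a {j}ᶜ) ≤ D * (a univ - a ∅) := by
  have hsum : ∀ T, a T = ∑ U ∈ T.powerset, moebius a U :=
    fun T => (sum_powerset_moebius a T).symm
  have hdiff : ∀ j, a univ - a {j}ᶜ = ∑ U, if j ∈ U then moebius a U else 0 := by
    intro j
    have : ({j}ᶜ : Finset ι).powerset = univ.filter fun U => j ∉ U := by
      ext U
      simp [subset_iff]
    rw [hsum, hsum, powerset_univ, this, ← sum_filter, ← sum_filter_add_sum_filter_not univ
      (fun U => j ∈ U)]
    ring
  calc ∑ j, (a univ - a {j}ᶜ) = ∑ U, U.card * moebius a U := by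
        simp_rw [hdiff]
        rw [sum_comm]
        simp
    _ = ∑ U ∈ univ.erase ∅, U.card * moebius a U := by
        rw [sum_erase]
        simp
    _ ≤ ∑ U ∈ univ.erase ∅, D * moebius a U := by
        refine sum_le_sum fun U _ => ?_
        rcases le_or_gt U.card D with hU | hU
        · exact mul_le_mul_of_nonneg_right (by exact_mod_cast hU) (hpos U)
        · simp [hvanish U hU]
    _ = D * (a univ - a ∅) := by
        rw [← mul_sum, sum_erase_eq_sub (mem_univ _), hsum univ, hsum ∅, powerset_univ]
        simp

end Moebius

theorem sq_integral_le_integral_sq {α : Type*} [MeasurableSpace α] {ν : Measure α}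
    [IsProbabilityMeasure ν] {u : α → ℝ} (hu : MemLp u 2 ν) :
    (∫ y, u y ∂ν) ^ 2 ≤ ∫ y, u y ^ 2 ∂ν := by
  have := variance_nonneg u ν
  rw [variance_eq_sub hu] at this
  simpa using this

theorem _root_.MeasureTheory.MeasurePreserving.integral_comp_of_aestronglyMeasurable
    {α β E : Type*} [MeasurableSpace α] [MeasurableSpace β] [NormedAddCommGroup E]
    [NormedSpace ℝ E] {μa : Measure α} {μb : Measure β} {φ : α → β}
    (hφ : MeasurePreserving φ μa μb) {F : β → E} (hF : AEStronglyMeasurable F μb) :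
    ∫ x, F (φ x) ∂μa = ∫ y, F y ∂μb := by
  rw [← hφ.map_eq] at hF ⊢
  exact (integral_map hφ.aemeasurable hF).symm

theorem piecewise_piecewise_eq_piecewise_inter {ι : Type*} [DecidableEq ι] {X : ι → Type*}
    (V W : Finset ι) (x y z : ∀ i, X i) :
    W.piecewise (V.piecewise x y) z = (V ∩ W).piecewise x (W.piecewise y z) := by
  ext i
  by_cases hW : i ∈ W <;> by_cases hV : i ∈ V <;> simp [hW, hV]

section CoordExp

variable {ι : Type*} [Fintype ι] [DecidableEq ι] {X : ι → Type*}
  [∀ i, MeasurableSpace (X i)] (μ : ∀ i, Measure (X i))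

theorem measurePreserving_piecewise [∀ i, IsProbabilityMeasure (μ i)] (W : Finset ι) :
    MeasurePreserving (fun p : (∀ i, X i) × (∀ i, X i) => W.piecewise p.1 p.2)
      ((Measure.pi μ).prod (Measure.pi μ)) (Measure.pi μ) := by
  have hmeas : Measurable (fun p : (∀ i, X i) × (∀ i, X i) => W.piecewise p.1 p.2) := by
    refine measurable_pi_lambda _ fun i => ?_
    by_cases hi : i ∈ W <;> simp only [hi, piecewise_eq_of_mem, piecewise_eq_of_notMem,
      not_false_eq_true] <;> fun_prop
  refine ⟨hmeas, (Measure.pi_eq fun s hs => ?_).symm⟩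
  have hpre : (fun p : (∀ i, X i) × (∀ i, X i) => W.piecewise p.1 p.2) ⁻¹' Set.univ.pi s =
      Set.univ.pi (fun i => if i ∈ W then s i else Set.univ) ×ˢ
        Set.univ.pi (fun i => if i ∈ W then Set.univ else s i) := by
    ext p
    simp only [Set.mem_preimage, Set.mem_pi, Set.mem_univ, forall_true_left, Set.mem_prod]
    constructor
    · intro h
      constructor <;> intro i <;> by_cases hi : i ∈ W <;> simp only [hi, if_true, if_false,
        Set.mem_univ] <;> simpa [hi] using h i
    · rintro ⟨h₁, h₂⟩ i
      by_cases hi : i ∈ W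
      · simpa [hi] using h₁ i
      · simpa [hi] using h₂ i
  rw [Measure.map_apply hmeas (MeasurableSet.univ_pi hs), hpre, Measure.prod_prod,
    Measure.pi_pi, Measure.pi_pi, ← prod_mul_distrib]
  exact prod_congr rfl fun i _ => by by_cases hi : i ∈ W <;> simp [hi]

/-- `E[f | x_W]`: the coordinates outside `W` are resampled. -/
noncomputable def coordExp (W : Finset ι) (f : (∀ i, X i) → ℝ) (x : ∀ i, X i) : ℝ :=
  ∫ y, f (W.piecewise x y) ∂Measure.pi μ

noncomputable def coordEnergy (f : (∀ i, X i) → ℝ) (W : Finset ι) : ℝ :=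
  ∫ x, coordExp μ W f x ^ 2 ∂Measure.pi μ

variable {μ}

theorem coordExp_empty (f : (∀ i, X i) → ℝ) (x : ∀ i, X i) :
    coordExp μ ∅ f x = ∫ y, f y ∂Measure.pi μ := by
  simp [coordExp]

theorem dependsOn_coordExp (W : Finset ι) (f : (∀ i, X i) → ℝ) :
    DependsOn (coordExp μ W f) W := by
  intro x x' h
  refine integral_congr_ae (ae_of_all _ fun y => congrArg f ?_)
  ext i
  by_cases hi : i ∈ W
  · simp [hi, h i hi]
  · simp [hi]

variable [∀ i, IsProbabilityMeasure (μ i)] {f : (∀ i, X i) → ℝ}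

theorem coordExp_univ (f : (∀ i, X i) → ℝ) : coordExp μ univ f = f := by
  ext x
  simp [coordExp]

theorem coordEnergy_univ (f : (∀ i, X i) → ℝ) :
    coordEnergy μ f univ = ∫ x, f x ^ 2 ∂Measure.pi μ := by
  simp [coordEnergy, coordExp_univ]

theorem coordEnergy_empty (f : (∀ i, X i) → ℝ) :
    coordEnergy μ f ∅ = (∫ x, f x ∂Measure.pi μ) ^ 2 := by
  simp [coordEnergy, coordExp_empty]

theorem memLp_comp_piecewise (hf : MemLp f 2 (Measure.pi μ)) (W : Finset ι) :
    MemLp (fun p : (∀ i, X i) × (∀ i, X i) => f (W.piecewise p.1 p.2)) 2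
      ((Measure.pi μ).prod (Measure.pi μ)) :=
  hf.comp_measurePreserving (measurePreserving_piecewise μ W)

theorem memLp_coordExp (hf : MemLp f 2 (Measure.pi μ)) (W : Finset ι) :
    MemLp (coordExp μ W f) 2 (Measure.pi μ) := by
  have hF := memLp_comp_piecewise hf W
  have hmeas : AEStronglyMeasurable (coordExp μ W f) (Measure.pi μ) :=
    hF.1.integral_prod_right'
  refine (memLp_two_iff_integrable_sq hmeas).2 <|
    hF.integrable_sq.integral_prod_left.mono' (hmeas.pow 2) ?_
  filter_upwards [hF.integrable_sq.prod_right_ae, hF.1.prodMk_left] with x hx hxm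
  rw [Real.norm_eq_abs, abs_of_nonneg (sq_nonneg _)]
  exact sq_integral_le_integral_sq ((memLp_two_iff_integrable_sq hxm).2 hx)

theorem integral_mul_coordExp {u h : (∀ i, X i) → ℝ} {W : Finset ι} (hu : DependsOn u W)
    (huL : MemLp u 2 (Measure.pi μ)) (hhL : MemLp h 2 (Measure.pi μ)) :
    ∫ x, u x * h x ∂Measure.pi μ = ∫ x, u x * coordExp μ W h x ∂Measure.pi μ := by
  have hφ := measurePreserving_piecewise μ W
  have hint : Integrable (fun x => u x * h x) (Measure.pi μ) := huL.integrable_mul hhL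
  have hu' : ∀ x y, u (W.piecewise x y) = u x := fun x y =>
    hu fun i hi => piecewise_eq_of_mem _ _ _ hi
  calc ∫ x, u x * h x ∂Measure.pi μ
      = ∫ p, u (W.piecewise p.1 p.2) * h (W.piecewise p.1 p.2)
          ∂(Measure.pi μ).prod (Measure.pi μ) :=
        (hφ.integral_comp_of_aestronglyMeasurable hint.1).symm
    _ = ∫ x, ∫ y, u x * h (W.piecewise x y) ∂Measure.pi μ ∂Measure.pi μ := by
        simp_rw [hu']
        exact integral_prod _ <| by
          simpa [Function.comp_def, hu'] using hφ.integrable_comp_of_integrable hint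
    _ = ∫ x, u x * coordExp μ W h x ∂Measure.pi μ := by
        simp_rw [integral_const_mul, coordExp]

theorem coordExp_coordExp (hf : Integrable f (Measure.pi μ)) (V W : Finset ι) :
    coordExp μ V (coordExp μ W f) =ᵐ[Measure.pi μ] coordExp μ (V ∩ W) f := by
  have hF := (measurePreserving_piecewise μ (V ∩ W)).integrable_comp_of_integrable hf
  filter_upwards [hF.prod_right_ae] with x hx
  have hφ := measurePreserving_piecewise μ W
  calc coordExp μ V (coordExp μ W f) x
      = ∫ y, ∫ z, f ((V ∩ W).piecewise x (W.piecewise y z)) ∂Measure.pi μ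
          ∂Measure.pi μ := by
        simp_rw [coordExp, piecewise_piecewise_eq_piecewise_inter]
    _ = ∫ p, f ((V ∩ W).piecewise x (W.piecewise p.1 p.2))
          ∂(Measure.pi μ).prod (Measure.pi μ) :=
        integral_integral (hφ.integrable_comp_of_integrable hx)
    _ = coordExp μ (V ∩ W) f x := hφ.integral_comp_of_aestronglyMeasurable hx.1

theorem integral_mul_coordExp_inter {u : (∀ i, X i) → ℝ} {V : Finset ι} (hu : DependsOn u V)
    (huL : MemLp u 2 (Measure.pi μ)) (hf : MemLp f 2 (Measure.pi μ)) (W : Finset ι) :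
    ∫ x, u x * coordExp μ W f x ∂Measure.pi μ
      = ∫ x, u x * coordExp μ (V ∩ W) f x ∂Measure.pi μ := by
  rw [integral_mul_coordExp hu huL (memLp_coordExp hf W)]
  exact integral_congr_ae <| (coordExp_coordExp (hf.integrable one_le_two) V W).mono
    fun x hx => by simp only [hx]

theorem integral_coordExp_mul_coordExp (hf : MemLp f 2 (Measure.pi μ)) (V W : Finset ι) :
    ∫ x, coordExp μ V f x * coordExp μ W f x ∂Measure.pi μ = coordEnergy μ f (V ∩ W) := by
  rw [integral_mul_coordExp_inter (dependsOn_coordExp V f) (memLp_coordExp hf V) hf W]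
  simp_rw [mul_comm (coordExp μ V f _)]
  rw [integral_mul_coordExp_inter (dependsOn_coordExp _ f) (memLp_coordExp hf _) hf V,
    inter_right_comm, inter_self, coordEnergy]
  simp_rw [sq]

theorem coordEnergy_eq_integral_mul (hf : MemLp f 2 (Measure.pi μ)) (W : Finset ι) :
    coordEnergy μ f W = ∫ x, f x * coordExp μ W f x ∂Measure.pi μ := by
  calc coordEnergy μ f W
      = ∫ x, coordExp μ W f x * coordExp μ (W ∩ univ) f x ∂Measure.pi μ := by
        simp_rw [inter_univ, coordEnergy, sq]
    _ = ∫ x, coordExp μ W f x * coordExp μ univ f x ∂Measure.pi μ :=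
        (integral_mul_coordExp_inter (dependsOn_coordExp W f) (memLp_coordExp hf W) hf _).symm
    _ = ∫ x, f x * coordExp μ W f x ∂Measure.pi μ := by
        simp_rw [coordExp_univ, mul_comm]

theorem integral_sq_sum_mul_coordExp (hf : MemLp f 2 (Measure.pi μ)) (s : Finset (Finset ι))
    (c : Finset ι → ℝ) :
    ∫ x, (∑ W ∈ s, c W * coordExp μ W f x) ^ 2 ∂Measure.pi μ
      = ∑ W ∈ s, ∑ V ∈ s, c W * c V * coordEnergy μ f (W ∩ V) := by
  have hint : ∀ W V, Integrable (fun x => c W * coordExp μ W f x * (c V * coordExp μ V f x))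
      (Measure.pi μ) := fun W V =>
    ((memLp_coordExp hf W).const_mul (c W)).integrable_mul
      ((memLp_coordExp hf V).const_mul (c V))
  simp_rw [sq, sum_mul_sum]
  rw [integral_finsetSum _ fun W _ => integrable_finsetSum _ fun V _ => hint W V]
  refine sum_congr rfl fun W _ => ?_
  rw [integral_finsetSum _ fun V _ => hint W V]
  refine sum_congr rfl fun V _ => ?_
  rw [← integral_coordExp_mul_coordExp hf, ← integral_const_mul]
  congr 1 with x
  ring

theorem moebius_coordEnergy_nonneg (hf : MemLp f 2 (Measure.pi μ)) (U : Finset ι) :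
    0 ≤ moebius (coordEnergy μ f) U := by
  rw [← sum_powerset_sum_powerset_inter_eq_moebius,
    ← integral_sq_sum_mul_coordExp hf _ fun W => (-1) ^ (U.card + W.card)]
  exact integral_nonneg fun x => sq_nonneg _

theorem moebius_integral_mul_coordExp_eq_zero {u : (∀ i, X i) → ℝ} {S U : Finset ι} {j : ι}
    (hu : DependsOn u S) (huL : MemLp u 2 (Measure.pi μ)) (hf : MemLp f 2 (Measure.pi μ))
    (hjU : j ∈ U) (hjS : j ∉ S) :
    moebius (fun W => ∫ x, u x * coordExp μ W f x ∂Measure.pi μ) U = 0 :=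
  moebius_eq_zero_of_insert_eq hjU fun W _ => by
    rw [integral_mul_coordExp_inter hu huL hf, integral_mul_coordExp_inter hu huL hf W,
      inter_insert_of_notMem hjS]

theorem moebius_coordEnergy_sum_eq_zero {κ : Type*} [Fintype κ] {g : κ → (∀ i, X i) → ℝ}
    {D : ℕ} (hgL : ∀ k, MemLp (g k) 2 (Measure.pi μ))
    (hdep : ∀ k, ∃ S : Finset ι, S.card ≤ D ∧ DependsOn (g k) S) {U : Finset ι}
    (hU : D < U.card) :
    moebius (coordEnergy μ fun x => ∑ k, g k x) U = 0 := by
  have hL : MemLp (fun x => ∑ k, g k x) 2 (Measure.pi μ) :=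
    memLp_finsetSum _ fun k _ => hgL k
  have hsplit : coordEnergy μ (fun x => ∑ k, g k x) = fun W =>
      ∑ k, ∫ x, g k x * coordExp μ W (fun x => ∑ k, g k x) x ∂Measure.pi μ := by
    ext W
    simp_rw [coordEnergy_eq_integral_mul hL, sum_mul]
    exact integral_finsetSum _ fun k _ => (hgL k).integrable_mul (memLp_coordExp hL W)
  rw [hsplit, moebius_sum]
  refine sum_eq_zero fun k _ => ?_
  obtain ⟨S, hSD, hS⟩ := hdep k
  obtain ⟨j, hjU, hjS⟩ :=
    not_subset.1 fun hUS => (card_le_card hUS).not_gt (hSD.trans_lt hU)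
  exact moebius_integral_mul_coordExp_eq_zero hS (hgL k) hL hjU hjS

theorem variance_eq_coordEnergy_sub (hf : MemLp f 2 (Measure.pi μ)) :
    variance f (Measure.pi μ) = coordEnergy μ f univ - coordEnergy μ f ∅ := by
  rw [variance_eq_sub hf, coordEnergy_univ, coordEnergy_empty]
  simp

theorem integral_integral_sub_coordExp_sq (hf : MemLp f 2 (Measure.pi μ)) (W : Finset ι) :
    ∫ x, ∫ y, (f (W.piecewise x y) - coordExp μ W f x) ^ 2 ∂Measure.pi μ ∂Measure.pi μ
      = coordEnergy μ f univ - coordEnergy μ f W := by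
  have hF := memLp_comp_piecewise hf W
  have hslice : ∀ᵐ x ∂Measure.pi μ,
      ∫ y, (f (W.piecewise x y) - coordExp μ W f x) ^ 2 ∂Measure.pi μ
        = ∫ y, f (W.piecewise x y) ^ 2 ∂Measure.pi μ - coordExp μ W f x ^ 2 := by
    filter_upwards [hF.integrable_sq.prod_right_ae, hF.1.prodMk_left] with x hx hxm
    have hu : MemLp (fun y => f (W.piecewise x y)) 2 (Measure.pi μ) :=
      (memLp_two_iff_integrable_sq hxm).2 hx
    have := variance_eq_sub hu
    rw [variance_eq_integral hxm.aemeasurable] at this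
    simpa [coordExp] using this
  rw [integral_congr_ae hslice, integral_sub hF.integrable_sq.integral_prod_left
    (memLp_coordExp hf W).integrable_sq, integral_integral hF.integrable_sq]
  dsimp only
  rw [(measurePreserving_piecewise μ W).integral_comp_of_aestronglyMeasurable
      (F := fun x => f x ^ 2) (hf.1.pow 2), coordEnergy_univ, coordEnergy]

theorem integral_update_eq_integral_piecewise {h : (∀ i, X i) → ℝ} (hh : Measurable h)
    (x : ∀ i, X i) (j : ι) :
    ∫ z, h (Function.update x j z) ∂μ j
      = ∫ y, h (({j}ᶜ : Finset ι).piecewise x y) ∂Measure.pi μ := by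
  have hupd (y : ∀ i, X i) :
      ({j}ᶜ : Finset ι).piecewise x y = Function.update x j (y j) := by
    ext i
    by_cases hi : i = j
    · subst hi
      simp
    · simp [hi]
  simp_rw [hupd]
  exact ((measurePreserving_eval μ j).integral_comp_of_aestronglyMeasurable
    (hh.comp (measurable_update x)).aestronglyMeasurable).symm

theorem integral_slice_variance_eq {g : (∀ i, X i) → ℝ} (hg : Measurable g)
    (hgL : MemLp g 2 (Measure.pi μ)) (j : ι) :
    ∫ x, (∫ z, (g (Function.update x j z) - ∫ z', g (Function.update x j z') ∂μ j) ^ 2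
        ∂μ j) ∂Measure.pi μ
      = coordEnergy μ g univ - coordEnergy μ g {j}ᶜ := by
  rw [← integral_integral_sub_coordExp_sq hgL]
  refine integral_congr_ae (ae_of_all _ fun x => ?_)
  simp only [integral_update_eq_integral_piecewise hg x j]
  exact integral_update_eq_integral_piecewise ((hg.sub measurable_const).pow_const 2) x j

end CoordExp

end EfronStein

open EfronStein

theorem statement15_general {X : Type u} [MeasurableSpace X] (μ : Measure X) [IsProbabilityMeasure μ]
    (J I D : ℕ)
    (g : (Fin J → X) → ℝ) (gi : Fin I → (Fin J → X) → ℝ)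
    (hg : ∀ x, g x = ∑ i, gi i x)
    (hmeas : ∀ i, Measurable (gi i))
    (hL2 : ∀ i, MemLp (gi i) 2 (Measure.pi fun _ : Fin J => μ))
    (hdep : ∀ i, ∃ S : Finset (Fin J), S.card ≤ D ∧
      ∀ x y : Fin J → X, (∀ j ∈ S, x j = y j) → gi i x = gi i y) :
    ∑ j : Fin J, ∫ x, (∫ z, (g (Function.update x j z) -
          ∫ z', g (Function.update x j z') ∂μ) ^ 2 ∂μ) ∂(Measure.pi fun _ : Fin J => μ)
      ≤ (D : ℝ) * variance g (Measure.pi fun _ : Fin J => μ) := by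
  have hg' : g = fun x => ∑ i, gi i x := funext hg
  have hgm : Measurable g := hg' ▸ Finset.measurable_fun_sum _ fun i _ => hmeas i
  have hgL : MemLp g 2 (Measure.pi fun _ : Fin J => μ) :=
    hg' ▸ memLp_finsetSum _ fun i _ => hL2 i
  rw [sum_congr rfl fun j _ => integral_slice_variance_eq hgm hgL j,
    variance_eq_coordEnergy_sub hgL]
  refine sum_sub_compl_singleton_le (moebius_coordEnergy_nonneg hgL) fun U hU => ?_
  rw [hg']
  exact moebius_coordEnergy_sum_eq_zero hL2 hdep hU

theorem statement15 {X : Type u} [MeasurableSpace X] (μ : Measure X) [IsProbabilityMeasure μ]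
    (J I D : ℕ) (hJ : 0 < J) (hI : 0 < I) (hD : 0 < D)
    (g : (Fin J → X) → ℝ) (gi : Fin I → (Fin J → X) → ℝ)
    (hg : ∀ x, g x = ∑ i, gi i x)
    (hmeas : ∀ i, Measurable (gi i))
    (hL2 : ∀ i, MemLp (gi i) 2 (Measure.pi fun _ : Fin J => μ))
    (hdep : ∀ i, ∃ S : Finset (Fin J), S.card ≤ D ∧
      ∀ x y : Fin J → X, (∀ j ∈ S, x j = y j) → gi i x = gi i y) :
    ∑ j : Fin J, ∫ x, (∫ z, (g (Function.update x j z) -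
          ∫ z', g (Function.update x j z') ∂μ) ^ 2 ∂μ) ∂(Measure.pi fun _ : Fin J => μ)
      ≤ (D : ℝ) * variance g (Measure.pi fun _ : Fin J => μ) :=
  statement15_general μ J I D g gi hg hmeas hL2 hdep
end

section
/- Let n, m, k, D be positive integers, let f : ℝ^N → ℝ^n be a deterministic degree-D polynomial, and let c > 0. For j ∈ [km], let Φ_k(n,m;j) denote the law of the pair (Φ,Φ') where Φ ~ Φ_k(n,m) and Φ' is obtained from Φ by resampling its j-th literal (in lexicographic clause-then-position order) uniformly from the 2n−1 literals different from it, and let λ_j = P_{(Φ,Φ')~Φ_k(n,m;j)}[(Φ,Φ') is c-bad with respect to f]. Then Σ_{j=1}^{km} λ_j ≤ 4D/c. -/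
open MeasureTheory Finset Filter ProbabilityTheory

universe u

/-!
Fix a coordinate `i` of `f` and view `g(v) = f(encode v)_i` as a function of the `km` literals
`v : [m] × [k] → [n] × {T,F}`. Every monomial of `f_i` reads at most `D` entries of the one-hot
encoding, hence at most `D` literals, so `g` is a linear combination of functions depending on
at most `D` coordinates and its Efron–Stein components `g_A` vanish for `|A| > D`. The
components are orthogonal, and resampling coordinate `j` only moves the components with
`j ∈ A`, so `∑_j E (g(v) - g(v^{(j)}))² = 2 ∑_A |A| E g_A² ≤ 2 D E g²`. Summing over `i` bounds
the total expected squared jump of `f` by `2D E‖f‖²`, and Markov's inequality at level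
`c E‖f‖²` turns this into `∑_j λ_j ≤ 4D/c`.
-/

lemma Finset.sum_powerset_neg_one_pow_smul_eq_zero {ι R M : Type*} [DecidableEq ι] [Ring R]
    [AddCommGroup M] [Module R M] {A : Finset ι} {j : ι} (hj : j ∈ A) (F : Finset ι → M)
    (hF : ∀ B ⊆ A.erase j, F (insert j B) = F B) :
    ∑ B ∈ A.powerset, (-1 : R) ^ (#A - #B) • F B = 0 := by
  rw [← Finset.insert_erase hj, Finset.sum_powerset_insert (Finset.notMem_erase j A),
    ← Finset.sum_add_distrib]
  refine Finset.sum_eq_zero fun B hB => ?_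
  have hBA := Finset.mem_powerset.mp hB
  have hjB : j ∉ B := fun h => Finset.notMem_erase j A (hBA h)
  have hcard : #B ≤ #(A.erase j) := Finset.card_le_card hBA
  rw [hF B hBA, Finset.card_insert_of_notMem (Finset.notMem_erase j A),
    Finset.card_insert_of_notMem hjB, ← add_smul, Nat.add_sub_add_right,
    Nat.sub_add_comm hcard, pow_succ]
  simp

lemma Finset.sum_Icc_univ_neg_one_pow {ι : Type*} [Fintype ι] [DecidableEq ι] (B : Finset ι) :
    ∑ A ∈ Finset.Icc B Finset.univ, (-1 : ℝ) ^ (#A - #B) = if B = Finset.univ then 1 else 0 := by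
  have hdisj : ∀ C ∈ (Finset.univ \ B).powerset, Disjoint B C := fun C hC =>
    Finset.disjoint_of_subset_right (Finset.mem_powerset.mp hC) Finset.disjoint_sdiff
  rw [Finset.Icc_eq_image_powerset (Finset.subset_univ B), Finset.sum_image fun C hC C' hC' h => by
    rw [← Finset.union_sdiff_cancel_left (hdisj C hC),
      ← Finset.union_sdiff_cancel_left (hdisj C' hC')]
    exact congrArg (· \ B) h]
  have hsign : ∀ C ∈ (Finset.univ \ B).powerset,
      (-1 : ℝ) ^ (#(B ∪ C) - #B) = (((-1 : ℤ) ^ #C : ℤ) : ℝ) := fun C hC => by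
    simp [Finset.card_union_of_disjoint (hdisj C hC)]
  rw [Finset.sum_congr rfl hsign, ← Int.cast_sum, Finset.sum_powerset_neg_one_pow_card]
  simp [Finset.sdiff_eq_empty_iff_subset, Finset.univ_subset_iff, apply_ite]

namespace EfronStein

open Function
open scoped BigOperators

variable {ι S : Type*} [DecidableEq ι]

variable (ι S) in
def juntaSpan (D : ℕ) : Submodule ℝ ((ι → S) → ℝ) :=
  Submodule.span ℝ {g | ∃ C : Finset ι, #C ≤ D ∧ DependsOn g C}

lemma eval_mem_juntaSpan {K : Type*} {D : ℕ} (π : K → ι) (e : (ι → S) → K → ℝ)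
    (he : ∀ κ, DependsOn (fun v => e v κ) {π κ}) {p : MvPolynomial K ℝ}
    (hp : p.totalDegree ≤ D) : (fun v => MvPolynomial.eval (e v) p) ∈ juntaSpan ι S D := by
  have hsum : (fun v => MvPolynomial.eval (e v) p)
      = ∑ d ∈ p.support, MvPolynomial.coeff d p • fun v => ∏ κ ∈ d.support, e v κ ^ d κ := by
    ext v; simp [MvPolynomial.eval_eq]
  rw [hsum]
  refine Submodule.sum_mem _ fun d hd => Submodule.smul_mem _ _ (Submodule.subset_span ?_)
  refine ⟨d.support.image π, ?_, fun v w hvw => Finset.prod_congr rfl fun κ hκ => ?_⟩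
  · calc #(d.support.image π) ≤ #d.support := Finset.card_image_le
      _ ≤ d.sum fun _ e => e := by
        simpa [Finsupp.sum] using Finset.card_nsmul_le_sum d.support d 1 fun κ hκ =>
          Nat.one_le_iff_ne_zero.mpr (Finsupp.mem_support_iff.mp hκ)
      _ ≤ D := (MvPolynomial.le_totalDegree hd).trans hp
  · have hκv : e v κ = e w κ := he κ fun i hi => hvw i <| by
      rw [Set.mem_singleton_iff.mp hi, Finset.coe_image]
      exact Set.mem_image_of_mem π hκ
    rw [hκv]

variable [Fintype ι] [Fintype S]

lemma expect_expect_piecewise {M : Type*} [AddCommMonoid M] [Module ℚ≥0 M] (B : Finset ι)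
    (F : (ι → S) → (ι → S) → M) :
    𝔼 v, 𝔼 w, F (B.piecewise v w) (B.piecewise w v) = 𝔼 v, 𝔼 w, F v w := by
  let swap : (ι → S) × (ι → S) ≃ (ι → S) × (ι → S) :=
    Involutive.toPerm (fun p => (B.piecewise p.1 p.2, B.piecewise p.2 p.1)) fun p => by
      ext j <;> by_cases hj : j ∈ B <;> simp [hj]
  simp only [← Finset.expect_product']
  exact Fintype.expect_equiv swap _ _ fun _ => rfl

/-- The conditional expectation `E[g | x_B]` for the uniform measure on `ι → S`. -/
noncomputable def condAvg (B : Finset ι) : ((ι → S) → ℝ) →ₗ[ℝ] (ι → S) → ℝ where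
  toFun g v := 𝔼 w, g (B.piecewise v w)
  map_add' g h := by ext v; simp [Finset.expect_add_distrib]
  map_smul' r g := by ext v; simp [Finset.mul_expect]

lemma condAvg_apply (B : Finset ι) (g : (ι → S) → ℝ) (v : ι → S) :
    condAvg B g v = 𝔼 w, g (B.piecewise v w) := rfl

lemma expect_condAvg_mul (B : Finset ι) (g h : (ι → S) → ℝ) :
    𝔼 v, condAvg B g v * h v = 𝔼 v, g v * condAvg B h v := by
  simp only [condAvg_apply, Finset.expect_mul, Finset.mul_expect]
  simpa only [Finset.piecewise_idem_left, Finset.piecewise_idem_right, Finset.piecewise_same]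
    using expect_expect_piecewise (S := S) B fun v w => g v * h (B.piecewise v w)

lemma condAvg_insert_of_dependsOn {g : (ι → S) → ℝ} {C : Finset ι} (hg : DependsOn g C)
    {j : ι} (hj : j ∉ C) (B : Finset ι) : condAvg (insert j B) g = condAvg B g := by
  ext v
  refine Finset.expect_congr rfl fun w _ => hg fun i hi => ?_
  have hij : i ≠ j := by rintro rfl; exact hj hi
  simp [Finset.piecewise, hij]

noncomputable def component (A : Finset ι) : ((ι → S) → ℝ) →ₗ[ℝ] (ι → S) → ℝ :=
  ∑ B ∈ A.powerset, (-1 : ℝ) ^ (#A - #B) • condAvg B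

lemma component_apply (A : Finset ι) (g : (ι → S) → ℝ) :
    component A g = ∑ B ∈ A.powerset, (-1 : ℝ) ^ (#A - #B) • condAvg B g := by
  simp [component]

lemma component_eq_zero_of_dependsOn {g : (ι → S) → ℝ} {C : Finset ι} (hg : DependsOn g C)
    {A : Finset ι} {j : ι} (hjA : j ∈ A) (hjC : j ∉ C) : component A g = 0 := by
  rw [component_apply]
  exact Finset.sum_powerset_neg_one_pow_smul_eq_zero hjA _ fun B _ =>
    condAvg_insert_of_dependsOn hg hjC B

lemma component_eq_zero_of_mem_juntaSpan {D : ℕ} {g : (ι → S) → ℝ}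
    (hg : g ∈ juntaSpan ι S D) {A : Finset ι} (hA : D < #A) : component A g = 0 := by
  suffices juntaSpan ι S D ≤ LinearMap.ker (component A) from this hg
  refine Submodule.span_le.mpr fun h ⟨C, hC, hhC⟩ => ?_
  obtain ⟨j, hjA, hjC⟩ := Finset.not_subset.mp fun hAC : A ⊆ C =>
    (Finset.card_le_card hAC).not_gt (hC.trans_lt hA)
  exact component_eq_zero_of_dependsOn hhC hjA hjC

variable [Nonempty S]

lemma expect_condAvg (B : Finset ι) (g : (ι → S) → ℝ) :
    𝔼 v, condAvg B g v = 𝔼 v, g v := by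
  simpa [condAvg_apply] using expect_expect_piecewise (S := S) B fun v _ => g v

@[simp]
lemma condAvg_univ (g : (ι → S) → ℝ) : condAvg Finset.univ g = g := by
  ext v; simp [condAvg_apply]

lemma condAvg_condAvg (B B' : Finset ι) (g : (ι → S) → ℝ) :
    condAvg B (condAvg B' g) = condAvg (B ∩ B') g := by
  ext v
  have hpw : ∀ w u : ι → S,
      B'.piecewise (B.piecewise v w) u = (B ∩ B').piecewise v (B'.piecewise w u) := by
    intro w u; ext j; by_cases hB : j ∈ B <;> by_cases hB' : j ∈ B' <;> simp [hB, hB']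
  simp only [condAvg_apply, hpw]
  simpa using expect_expect_piecewise (S := S) B' fun w _ => g ((B ∩ B').piecewise v w)

lemma condAvg_compl_singleton_apply (j : ι) (g : (ι → S) → ℝ) (v : ι → S) :
    condAvg {j}ᶜ g v = 𝔼 s, g (update v j s) := by
  have hpw : ∀ w : ι → S, ({j}ᶜ : Finset ι).piecewise v w = update v j (w j) := by
    intro w; ext i; by_cases hi : i = j <;> simp [hi]
  simp only [condAvg_apply, hpw]
  rw [Fintype.expect_equiv (Equiv.funSplitAt j S) (fun w => g (update v j (w j)))
    (fun p => g (update v j p.1)) fun _ => rfl, ← Finset.univ_product_univ,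
    Finset.expect_product]
  simp

lemma condAvg_compl_singleton_component_of_mem {A : Finset ι} {j : ι} (hj : j ∈ A)
    (g : (ι → S) → ℝ) : condAvg {j}ᶜ (component A g) = 0 := by
  have hinter : ∀ B : Finset ι, {j}ᶜ ∩ B = B.erase j := fun B => by ext i; simp
  simp only [component_apply, map_sum, map_smul, condAvg_condAvg, hinter]
  refine Finset.sum_powerset_neg_one_pow_smul_eq_zero hj _ fun B hB => ?_
  have hjB : j ∉ B := fun h => Finset.notMem_erase j A (hB h)
  rw [Finset.erase_insert hjB, Finset.erase_eq_of_notMem hjB]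

lemma condAvg_compl_singleton_component_of_notMem {A : Finset ι} {j : ι} (hj : j ∉ A)
    (g : (ι → S) → ℝ) : condAvg {j}ᶜ (component A g) = component A g := by
  simp only [component_apply, map_sum, map_smul, condAvg_condAvg]
  refine Finset.sum_congr rfl fun B hB => ?_
  rw [Finset.inter_eq_right.mpr fun i hi => ?_]
  simpa using fun h : i = j => hj (h ▸ Finset.mem_powerset.mp hB hi)

lemma sum_component (g : (ι → S) → ℝ) : ∑ A, component A g = g := by
  simp only [component_apply]
  rw [Finset.sum_comm' (t' := Finset.univ) (s' := fun B => Finset.Icc B Finset.univ)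
    fun A B => by simp]
  simp_rw [← Finset.sum_smul, Finset.sum_Icc_univ_neg_one_pow, ite_smul, one_smul, zero_smul]
  simp

lemma expect_component_mul_component_of_ne (g : (ι → S) → ℝ) {A B : Finset ι}
    (hAB : A ≠ B) : 𝔼 v, component A g v * component B g v = 0 := by
  wlog h : ¬A ⊆ B generalizing A B
  · rw [← this hAB.symm fun hBA => hAB (Finset.Subset.antisymm (not_not.mp h) hBA)]
    simp only [mul_comm]
  obtain ⟨j, hjA, hjB⟩ := Finset.not_subset.mp h
  rw [← condAvg_compl_singleton_component_of_notMem hjB, ← expect_condAvg_mul,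
    condAvg_compl_singleton_component_of_mem hjA]
  simp

lemma expect_mul_component (g : (ι → S) → ℝ) (A : Finset ι) :
    𝔼 v, g v * component A g v = 𝔼 v, component A g v ^ 2 := by
  calc 𝔼 v, g v * component A g v
      = 𝔼 v, (∑ B, component B g) v * component A g v := by rw [sum_component]
    _ = ∑ B, 𝔼 v, component B g v * component A g v := by
      simp only [Finset.sum_apply, Finset.sum_mul, Finset.expect_sum_comm]
    _ = 𝔼 v, component A g v ^ 2 := by
      rw [Finset.sum_eq_single A (fun B _ hBA => expect_component_mul_component_of_ne g hBA)
        (by simp)]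
      simp [sq]

lemma expect_sq_eq_sum_expect_component_sq (g : (ι → S) → ℝ) :
    𝔼 v, g v ^ 2 = ∑ A, 𝔼 v, component A g v ^ 2 := by
  calc 𝔼 v, g v ^ 2 = 𝔼 v, g v * (∑ A, component A g) v := by
        rw [sum_component]; simp only [sq]
    _ = ∑ A, 𝔼 v, component A g v ^ 2 := by
      simp only [Finset.sum_apply, Finset.mul_sum, Finset.expect_sum_comm, expect_mul_component]

lemma expect_sq_sub_expect_mul_condAvg (g : (ι → S) → ℝ) (j : ι) :
    𝔼 v, g v ^ 2 - 𝔼 v, g v * condAvg {j}ᶜ g v = ∑ A with j ∈ A, 𝔼 v, component A g v ^ 2 := by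
  have hcond : condAvg {j}ᶜ g = ∑ A with j ∉ A, component A g := by
    conv_lhs => rw [← sum_component g]
    rw [map_sum, ← Finset.sum_filter_add_sum_filter_not _ (j ∈ ·)]
    rw [Finset.sum_eq_zero fun A hA => condAvg_compl_singleton_component_of_mem
      (Finset.mem_filter.mp hA).2 g, zero_add]
    exact Finset.sum_congr rfl fun A hA => condAvg_compl_singleton_component_of_notMem
      (Finset.mem_filter.mp hA).2 g
  simp only [hcond, Finset.sum_apply, Finset.mul_sum, Finset.expect_sum_comm,
    expect_mul_component]
  rw [expect_sq_eq_sum_expect_component_sq, ← Finset.sum_filter_add_sum_filter_not _ (j ∈ ·)]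
  ring

lemma sum_influence_le_of_mem_juntaSpan {D : ℕ} {g : (ι → S) → ℝ} (hg : g ∈ juntaSpan ι S D) :
    ∑ j, (𝔼 v, g v ^ 2 - 𝔼 v, g v * condAvg {j}ᶜ g v) ≤ D * 𝔼 v, g v ^ 2 := by
  calc ∑ j, (𝔼 v, g v ^ 2 - 𝔼 v, g v * condAvg {j}ᶜ g v)
      = ∑ A, #A * 𝔼 v, component A g v ^ 2 := by
        simp only [expect_sq_sub_expect_mul_condAvg, Finset.sum_filter]
        rw [Finset.sum_comm]
        simp [Finset.sum_ite_mem]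
    _ ≤ ∑ A, D * 𝔼 v, component A g v ^ 2 := by
        refine Finset.sum_le_sum fun A _ => ?_
        rcases le_or_gt #A D with hA | hA
        · exact mul_le_mul_of_nonneg_right (by exact_mod_cast hA)
            (Finset.expect_nonneg fun v _ => sq_nonneg _)
        · simp [component_eq_zero_of_mem_juntaSpan hg hA]
    _ = D * 𝔼 v, g v ^ 2 := by rw [← Finset.mul_sum, expect_sq_eq_sum_expect_component_sq]

lemma expect_expect_sq_sub_update (g : (ι → S) → ℝ) (j : ι) :
    𝔼 v, 𝔼 s, (g v - g (update v j s)) ^ 2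
      = 2 * (𝔼 v, g v ^ 2 - 𝔼 v, g v * condAvg {j}ᶜ g v) := by
  have hupdate : 𝔼 v, 𝔼 s, g (update v j s) ^ 2 = 𝔼 v, g v ^ 2 := by
    simpa only [condAvg_compl_singleton_apply] using expect_condAvg {j}ᶜ (fun v => g v ^ 2)
  simp only [sub_sq, Finset.expect_add_distrib, Finset.expect_sub_distrib, hupdate,
    condAvg_compl_singleton_apply, Finset.mul_expect]
  simp only [Fintype.expect_const, mul_assoc, ← Finset.mul_expect]
  ring

theorem sum_expect_expect_sq_sub_update_le {D : ℕ} {g : (ι → S) → ℝ}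
    (hg : g ∈ juntaSpan ι S D) :
    ∑ j, 𝔼 v, 𝔼 s, (g v - g (update v j s)) ^ 2 ≤ 2 * D * 𝔼 v, g v ^ 2 := by
  simp only [expect_expect_sq_sub_update, ← Finset.mul_sum, mul_assoc]
  exact mul_le_mul_of_nonneg_left (sum_influence_le_of_mem_juntaSpan hg) zero_le_two

end EfronStein

section RandomFormula

open Function EfronStein
open scoped BigOperators

variable {n m k : ℕ}

lemma updLit_curry (v : Fin m × Fin k → Fin n × Bool) (a : Fin m) (b : Fin k)
    (L : Fin n × Bool) : updLit (curry v) a b L = curry (update v (a, b) L) := by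
  ext i j : 2
  simp [updLit, update_apply, Prod.ext_iff]

lemma expect_formula_eq_expect_curry {M : Type*} [AddCommMonoid M] [Module ℚ≥0 M]
    (F : Formula n m k → M) :
    𝔼 Φ, F Φ = 𝔼 v : Fin m × Fin k → Fin n × Bool, F (curry v) :=
  (Fintype.expect_equiv (Equiv.curry _ _ _) _ _ fun _ => rfl).symm

lemma Eform_eq_expect (g : Formula n m k → ℝ) : Eform n m k g = 𝔼 Φ, g Φ := by
  rw [Eform, Finset.expect_eq_sum_div_card, Finset.card_univ]

lemma encode_curry_mem_juntaSpan {D : ℕ} {f : (Coords n m k → ℝ) → Fin n → ℝ}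
    (hf : IsDegPoly n m k D f) (i : Fin n) :
    (fun v => f (encode (curry v)) i) ∈ juntaSpan (Fin m × Fin k) (Fin n × Bool) D := by
  obtain ⟨p, hp, hfp⟩ := hf i
  simp only [hfp]
  refine eval_mem_juntaSpan (fun κ => (κ.1, κ.2.1)) _ (fun κ v w hvw => ?_) hp
  have hκ : curry v κ.1 κ.2.1 = curry w κ.1 κ.2.1 := hvw (κ.1, κ.2.1) rfl
  simp only [encode, hκ]

lemma sum_expect_sum_sq_sub_updLit_le (hn : 0 < n) {D : ℕ} {f : (Coords n m k → ℝ) → Fin n → ℝ}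
    (hf : IsDegPoly n m k D f) :
    ∑ a, ∑ b, 𝔼 Φ, 𝔼 L, ∑ i, (f (encode Φ) i - f (encode (updLit Φ a b L)) i) ^ 2
      ≤ 2 * D * 𝔼 Φ, ∑ i, f (encode Φ) i ^ 2 := by
  have : Nonempty (Fin n × Bool) := ⟨(⟨0, hn⟩, true)⟩
  calc ∑ a, ∑ b, 𝔼 Φ, 𝔼 L, ∑ i, (f (encode Φ) i - f (encode (updLit Φ a b L)) i) ^ 2
      = ∑ i, ∑ j, 𝔼 v, 𝔼 s,
          (f (encode (curry v)) i - f (encode (curry (update v j s))) i) ^ 2 := by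
        simp only [expect_formula_eq_expect_curry, updLit_curry, Finset.expect_sum_comm]
        rw [← Fintype.sum_prod_type']
        exact Finset.sum_comm
    _ ≤ ∑ i, 2 * D * 𝔼 v, f (encode (curry v)) i ^ 2 :=
        Finset.sum_le_sum fun i _ =>
          sum_expect_expect_sq_sub_update_le (encode_curry_mem_juntaSpan hf i)
    _ = 2 * D * 𝔼 Φ, ∑ i, f (encode Φ) i ^ 2 := by
        rw [expect_formula_eq_expect_curry, ← Finset.mul_sum, Finset.expect_sum_comm]

lemma lambdaPos_eq_zero_of_Eform_eq_zero {f : (Coords n m k → ℝ) → Fin n → ℝ} {c : ℝ}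
    (h : Eform n m k (fun Ψ => ∑ i, f (encode Ψ) i ^ 2) = 0) (a : Fin m) (b : Fin k) :
    lambdaPos f c a b = 0 := by
  rw [lambdaPos, Finset.sum_eq_zero, zero_div]
  intro Φ _
  have : Nonempty (Formula n m k) := ⟨Φ⟩
  have hsum : ∑ Ψ, ∑ i, f (encode Ψ) i ^ 2 = 0 :=
    (div_eq_zero_iff.mp h).resolve_right (Nat.cast_ne_zero.mpr Fintype.card_ne_zero)
  have hzero : ∀ Ψ i, f (encode Ψ) i = 0 := by
    simpa [Finset.sum_eq_zero_iff_of_nonneg, Finset.sum_nonneg, sq_nonneg] using hsum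
  simp only [cBad, h]
  simp [hzero]

open Classical in
/-- The factor `2` bounds `2n / (2n - 1)`: `λ` resamples among the `2n - 1` literals other than
the current one, the expectation on the right among all `2n`. -/
lemma lambdaPos_mul_le (hn : 0 < n) (f : (Coords n m k → ℝ) → Fin n → ℝ) (c : ℝ)
    (a : Fin m) (b : Fin k) :
    lambdaPos f c a b * (c * Eform n m k (fun Ψ => ∑ i, f (encode Ψ) i ^ 2))
      ≤ 2 * 𝔼 Φ, 𝔼 L, ∑ i, (f (encode Φ) i - f (encode (updLit Φ a b L)) i) ^ 2 := by
  have : Nonempty (Fin n × Bool) := ⟨(⟨0, hn⟩, true)⟩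
  have hC : (0 : ℝ) < Fintype.card (Formula n m k) := by exact_mod_cast Fintype.card_pos
  have hn' : (1 : ℝ) ≤ n := by exact_mod_cast hn
  have hmarkov : ∀ Φ L, (if L ≠ Φ a b ∧ cBad f c Φ (updLit Φ a b L) then (1 : ℝ) else 0)
      * (c * Eform n m k (fun Ψ => ∑ i, f (encode Ψ) i ^ 2))
      ≤ ∑ i, (f (encode Φ) i - f (encode (updLit Φ a b L)) i) ^ 2 := by
    intro Φ L
    split_ifs with hbad
    · simpa using hbad.2.le
    · simpa using Finset.sum_nonneg fun i _ => sq_nonneg _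
  have hdist : 0 ≤ ∑ Φ, ∑ L, ∑ i, (f (encode Φ) i - f (encode (updLit Φ a b L)) i) ^ 2 := by
    positivity
  rw [lambdaPos, div_mul_eq_mul_div, div_le_iff₀ (mul_pos hC (by linarith))]
  simp only [Finset.sum_mul]
  refine (Finset.sum_le_sum fun Φ _ => Finset.sum_le_sum fun L _ => hmarkov Φ L).trans ?_
  simp only [Finset.expect_eq_sum_div_card, Finset.card_univ, ← Finset.sum_div,
    Fintype.card_prod, Fintype.card_fin, Fintype.card_bool, Nat.cast_mul, Nat.cast_ofNat]
  field_simp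
  nlinarith

lemma sum_sum_lambdaPos_mul_le (hn : 0 < n) {D : ℕ} {f : (Coords n m k → ℝ) → Fin n → ℝ}
    (hf : IsDegPoly n m k D f) (c : ℝ) :
    (∑ a, ∑ b, lambdaPos f c a b) * (c * Eform n m k (fun Ψ => ∑ i, f (encode Ψ) i ^ 2))
      ≤ 4 * D * Eform n m k (fun Ψ => ∑ i, f (encode Ψ) i ^ 2) :=
  calc (∑ a, ∑ b, lambdaPos f c a b) * (c * Eform n m k (fun Ψ => ∑ i, f (encode Ψ) i ^ 2))
      ≤ ∑ a, ∑ b, 2 * 𝔼 Φ, 𝔼 L, ∑ i, (f (encode Φ) i - f (encode (updLit Φ a b L)) i) ^ 2 := by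
        simp only [Finset.sum_mul]
        exact Finset.sum_le_sum fun a _ => Finset.sum_le_sum fun b _ =>
          lambdaPos_mul_le hn f c a b
    _ ≤ 2 * (2 * D * 𝔼 Φ, ∑ i, f (encode Φ) i ^ 2) := by
        simp only [← Finset.mul_sum]
        gcongr
        exact sum_expect_sum_sq_sub_updLit_le hn hf
    _ = 4 * D * Eform n m k (fun Ψ => ∑ i, f (encode Ψ) i ^ 2) := by
        rw [Eform_eq_expect]; ring

end RandomFormula

theorem statement16_general (n m k D : ℕ) (hn : 0 < n)
    (f : (Coords n m k → ℝ) → Fin n → ℝ) (hf : IsDegPoly n m k D f)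
    (c : ℝ) (hc : 0 < c) :
    ∑ a : Fin m, ∑ b : Fin k, lambdaPos f c a b ≤ 4 * (D : ℝ) / c := by
  have hE : 0 ≤ Eform n m k (fun Ψ => ∑ i, f (encode Ψ) i ^ 2) :=
    div_nonneg (Finset.sum_nonneg fun Φ _ => by positivity) (Nat.cast_nonneg _)
  rcases hE.eq_or_lt with hE0 | hEpos
  · simp only [lambdaPos_eq_zero_of_Eform_eq_zero hE0.symm, Finset.sum_const_zero]
    positivity
  rw [le_div_iff₀ hc]
  refine le_of_mul_le_mul_right ?_ hEpos
  simpa only [mul_assoc] using sum_sum_lambdaPos_mul_le hn hf c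

theorem statement16 (n m k D : ℕ) (hn : 0 < n) (hm : 0 < m) (hk : 0 < k) (hD : 0 < D)
    (f : (Coords n m k → ℝ) → Fin n → ℝ) (hf : IsDegPoly n m k D f)
    (c : ℝ) (hc : 0 < c) :
    ∑ a : Fin m, ∑ b : Fin k, lambdaPos f c a b ≤ 4 * (D : ℝ) / c :=
  statement16_general n m k D hn f hf c hc
end
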